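/- arXiv:1608.06314 — 7 statements merged into one kernel-verified Lean document; each statement's English description precedes it below -/
import Mathlib

section
/- Suppose there is no δ > 0 such that both P and Q are δ-lattice distributions. If α > 0 is a real number with ψ(α) = 0 and τ is a real number with ψ(α + iτ) = 0, then τ = 0. In other words, α is the only zero of ψ on the vertical line Re(s) = α. -/
/-!
Subtracting `ψ(α + iτ) = 0` from `ψ(α) = 0` and taking real parts gives
`∫ e^{-αt} (1 - cos τt) dP + ∫ e^{-αt} (1 - cos τt) dQ = 0`. Both integrands are
nonnegative, so both integrals vanish and `cos τt = 1` almost surely for `P` and for `Q`.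
For `τ ≠ 0` the positive solutions of `cos τt = 1` are the multiples `k · 2π/|τ|`, `k ≥ 1`,
so `P` and `Q` would both be `2π/|τ|`-lattice distributions.
-/

open MeasureTheory Set Filter

/-- A probability measure on `(0,∞)` is a `δ`-lattice distribution if it is supported
on the set `{kδ : k = 1, 2, 3, ...}`. -/
def IsLatticeDist (P : Measure ℝ) (δ : ℝ) : Prop :=
  ∀ᵐ t ∂P, ∃ k : ℕ, 0 < k ∧ t = (k : ℝ) * δ

open Real
open scoped Complex

section LaplaceTransform

variable {μ : Measure ℝ}

lemma ae_pos_of_measure_Iic_zero (hμ : μ (Iic 0) = 0) : ∀ᵐ t ∂μ, 0 < t :=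
  (measure_eq_zero_iff_ae_notMem.1 hμ).mono fun _ ht => not_le.1 ht

lemma integrable_cexp_neg_mul [IsFiniteMeasure μ] (hμ : ∀ᵐ t ∂μ, 0 < t) {s : ℂ}
    (hs : 0 ≤ s.re) : Integrable (fun t : ℝ => cexp (-s * t)) μ := by
  refine Integrable.mono' (integrable_const 1) (by fun_prop) ?_
  filter_upwards [hμ] with t ht
  rw [Complex.norm_exp, Real.exp_le_one_iff]
  simpa using mul_nonneg hs ht.le

lemma re_cexp_sub_cexp (α τ t : ℝ) :
    (cexp (-(α : ℂ) * t) - cexp (-(α + τ * Complex.I) * t)).re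
      = rexp (-(α * t)) * (1 - cos (τ * t)) := by
  simp [Complex.exp_re, Complex.mul_re, Complex.mul_im, mul_sub]

variable [IsFiniteMeasure μ] (hμ : ∀ᵐ t ∂μ, 0 < t) {α : ℝ} (hα : 0 ≤ α) (τ : ℝ)
include hμ hα

lemma integrable_cexp_sub_cexp :
    Integrable (fun t : ℝ => cexp (-(α : ℂ) * t) - cexp (-(α + τ * Complex.I) * t)) μ :=
  (integrable_cexp_neg_mul hμ (by simpa using hα)).sub
    (integrable_cexp_neg_mul hμ (by simpa using hα))

lemma integrable_exp_neg_mul_one_sub_cos :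
    Integrable (fun t => rexp (-(α * t)) * (1 - cos (τ * t))) μ := by
  simpa only [RCLike.re_to_complex, re_cexp_sub_cexp] using
    (integrable_cexp_sub_cexp hμ hα τ).re

lemma re_integral_cexp_sub_integral_cexp :
    ((∫ t, cexp (-(α : ℂ) * t) ∂μ) - ∫ t, cexp (-(α + τ * Complex.I) * t) ∂μ).re
      = ∫ t, rexp (-(α * t)) * (1 - cos (τ * t)) ∂μ := by
  rw [← integral_sub (integrable_cexp_neg_mul hμ (by simpa using hα))
    (integrable_cexp_neg_mul hμ (by simpa using hα)), ← RCLike.re_to_complex,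
    ← integral_re (integrable_cexp_sub_cexp hμ hα τ)]
  simp only [RCLike.re_to_complex, re_cexp_sub_cexp]

end LaplaceTransform

lemma exp_neg_mul_mul_one_sub_cos_nonneg (α τ t : ℝ) :
    0 ≤ rexp (-(α * t)) * (1 - cos (τ * t)) :=
  mul_nonneg (exp_pos _).le (sub_nonneg.2 (cos_le_one _))

lemma exists_pos_nat_eq_mul_of_cos_eq_one {τ t : ℝ} (hτ : τ ≠ 0) (ht : 0 < t)
    (h : cos (τ * t) = 1) : ∃ k : ℕ, 0 < k ∧ t = k * (2 * π / |τ|) := by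
  obtain ⟨n, hn⟩ := (cos_eq_one_iff _).1 h
  have hτt : |τ| * t = n.natAbs * (2 * π) := by
    rw [Nat.cast_natAbs, Int.cast_abs, ← abs_of_pos ht, ← abs_mul, ← hn, abs_mul,
      abs_of_pos (by positivity : 0 < 2 * π)]
  refine ⟨n.natAbs, Nat.pos_of_ne_zero fun hn₀ => ?_, ?_⟩
  · rw [hn₀, Nat.cast_zero, zero_mul] at hτt
    exact (mul_pos (abs_pos.2 hτ) ht).ne' hτt
  · field_simp
    linarith

lemma isLatticeDist_of_ae_cos_eq_one {μ : Measure ℝ} (hμ : ∀ᵐ t ∂μ, 0 < t) {τ : ℝ}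
    (hτ : τ ≠ 0) (h : ∀ᵐ t ∂μ, cos (τ * t) = 1) : IsLatticeDist μ (2 * π / |τ|) := by
  filter_upwards [hμ, h] with t ht hcos
  exact exists_pos_nat_eq_mul_of_cos_eq_one hτ ht hcos

lemma ae_cos_eq_one_of_integral_exp_neg_mul_one_sub_cos_eq_zero {μ : Measure ℝ} {α τ : ℝ}
    (hint : Integrable (fun t => rexp (-(α * t)) * (1 - cos (τ * t))) μ)
    (h : ∫ t, rexp (-(α * t)) * (1 - cos (τ * t)) ∂μ = 0) :
    ∀ᵐ t ∂μ, cos (τ * t) = 1 := by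
  have hnonneg := exp_neg_mul_mul_one_sub_cos_nonneg α τ
  filter_upwards [(integral_eq_zero_iff_of_nonneg hnonneg hint).1 h] with t ht
  have := (mul_eq_zero.1 ht).resolve_left (exp_pos _).ne'
  linarith

/-- Suppose there is no `δ > 0` such that both `P` and `Q` are `δ`-lattice
distributions. If `α > 0` is a real number with `ψ(α) = 0` and `τ` is a real number with
`ψ(α + iτ) = 0`, then `τ = 0`; i.e. `α` is the only zero of `ψ` on the line `Re s = α`. -/
theorem stmt1
    (P Q : Measure ℝ) [IsProbabilityMeasure P] [IsProbabilityMeasure Q]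
    (hP : P (Set.Iic 0) = 0) (hQ : Q (Set.Iic 0) = 0)
    (ψ : ℂ → ℂ)
    (hψ : ∀ s : ℂ, ψ s =
      1 - (∫ t, Complex.exp (-s * (t : ℂ)) ∂P) - (∫ t, Complex.exp (-s * (t : ℂ)) ∂Q))
    (hlat : ¬ ∃ δ : ℝ, 0 < δ ∧ IsLatticeDist P δ ∧ IsLatticeDist Q δ)
    (α : ℝ) (hα : 0 < α) (hroot : ψ (α : ℂ) = 0)
    (τ : ℝ) (hroot' : ψ ((α : ℂ) + (τ : ℂ) * Complex.I) = 0) :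
    τ = 0 := by
  by_contra hτ
  have hP₀ := ae_pos_of_measure_Iic_zero hP
  have hQ₀ := ae_pos_of_measure_Iic_zero hQ
  have hsum :
      ((∫ t, cexp (-(α : ℂ) * t) ∂P) - ∫ t, cexp (-(α + τ * Complex.I) * t) ∂P)
        + ((∫ t, cexp (-(α : ℂ) * t) ∂Q) - ∫ t, cexp (-(α + τ * Complex.I) * t) ∂Q) = 0 := by
    rw [hψ] at hroot hroot'
    linear_combination hroot' - hroot
  have hsum_re := congrArg Complex.re hsum
  rw [Complex.add_re, Complex.zero_re, re_integral_cexp_sub_integral_cexp hP₀ hα.le,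
    re_integral_cexp_sub_integral_cexp hQ₀ hα.le] at hsum_re
  have hnonneg (μ : Measure ℝ) : 0 ≤ ∫ t, rexp (-(α * t)) * (1 - cos (τ * t)) ∂μ :=
    integral_nonneg fun t => exp_neg_mul_mul_one_sub_cos_nonneg α τ t
  have hP_cos := ae_cos_eq_one_of_integral_exp_neg_mul_one_sub_cos_eq_zero
    (integrable_exp_neg_mul_one_sub_cos hP₀ hα.le τ) (by linarith [hnonneg P, hnonneg Q])
  have hQ_cos := ae_cos_eq_one_of_integral_exp_neg_mul_one_sub_cos_eq_zero
    (integrable_exp_neg_mul_one_sub_cos hQ₀ hα.le τ) (by linarith [hnonneg P, hnonneg Q])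
  exact hlat ⟨2 * π / |τ|, by positivity, isLatticeDist_of_ae_cos_eq_one hP₀ hτ hP_cos,
    isLatticeDist_of_ae_cos_eq_one hQ₀ hτ hQ_cos⟩
end

section
/- (Renewal limit lemma of Bellman–Harris.) Let μ be a finite Borel measure on [0,∞) with μ({0}) = 0 and total mass a = μ([0,∞)) < 1. Let h : [0,∞) → ℝ be a bounded measurable function with lim_{t→∞} h(t) = c, and let v : [0,∞) → ℝ be a bounded measurable function satisfying v(t) = ∫_{[0,t]} v(t-y) dμ(y) + h(t) for all t ≥ 0. Then lim_{t→∞} v(t) = c/(1-a). -/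
open MeasureTheory Set Filter Topology

/-!
Subtracting the candidate limit `k = c / (1 - a)` turns the equation into
`w t = ∫_{[0,t]} w (t - y) dμ(y) + g t` with `g → 0`, since `μ [0,t] → a`. For `L = limsup |w|`,
splitting the integral at a large `T` bounds it by `(L + ε) a + M μ (T, ∞)`, whence `L ≤ a L`;
as `a < 1` this forces `L = 0`.
-/

section Renewal

variable {μ : Measure ℝ}

theorem measure_Icc_zero_eq_measure_Iic (hμ : μ (Iio 0) = 0) (t : ℝ) :
    μ (Icc 0 t) = μ (Iic t) := by
  rw [← measure_sdiff_null (s := Iic t) hμ]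
  congr 1
  ext y
  simp [and_comm]

variable [IsFiniteMeasure μ]

theorem tendsto_measureReal_Iic_atTop :
    Tendsto (fun t : ℝ => μ.real (Iic t)) atTop (𝓝 (μ.real univ)) :=
  (ENNReal.tendsto_toReal (measure_ne_top μ univ)).comp (tendsto_measure_Iic_atTop μ)

theorem tendsto_measureReal_Icc_zero_atTop (hμ : μ (Iio 0) = 0) :
    Tendsto (fun t : ℝ => μ.real (Icc 0 t)) atTop (𝓝 (μ.real univ)) := by
  simpa only [measureReal_def, measure_Icc_zero_eq_measure_Iic hμ] using
    (tendsto_measureReal_Iic_atTop (μ := μ))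

theorem tendsto_measureReal_Ioi_atTop : Tendsto (fun t : ℝ => μ.real (Ioi t)) atTop (𝓝 0) := by
  simpa [← compl_Iic, measureReal_compl measurableSet_Iic] using
    (tendsto_measureReal_Iic_atTop (μ := μ)).const_sub (μ.real univ)

theorem integrable_comp_sub_of_abs_le {w : ℝ → ℝ} (hwm : Measurable w) {M : ℝ}
    (hM : ∀ s, |w s| ≤ M) (t : ℝ) : Integrable (fun y => w (t - y)) μ :=
  .of_bound (by fun_prop : Measurable fun y => w (t - y)).aestronglyMeasurable M
    (ae_of_all _ fun y => hM (t - y))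

theorem abs_setIntegral_Icc_comp_sub_le {w : ℝ → ℝ} (hwm : Measurable w) {M B S T t : ℝ}
    (hM : ∀ s, |w s| ≤ M) (hB : ∀ s ≥ S, |w s| ≤ B) (ht : S + T ≤ t) :
    |∫ y in Icc 0 t, w (t - y) ∂μ| ≤ B * μ.real univ + M * μ.real (Ioi T) := by
  have hB0 : 0 ≤ B := (abs_nonneg _).trans (hB S le_rfl)
  have hM0 : 0 ≤ M := (abs_nonneg _).trans (hM 0)
  rw [← integral_inter_add_sdiff measurableSet_Iic
    (integrable_comp_sub_of_abs_le hwm hM t).integrableOn]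
  calc _ ≤ ‖∫ y in Icc 0 t ∩ Iic T, w (t - y) ∂μ‖ + ‖∫ y in Icc 0 t \ Iic T, w (t - y) ∂μ‖ :=
        norm_add_le _ _
    _ ≤ B * μ.real (Icc 0 t ∩ Iic T) + M * μ.real (Icc 0 t \ Iic T) := by
        refine add_le_add
          (norm_setIntegral_le_of_norm_le_const (measure_lt_top μ _) fun y hy => hB _ ?_)
          (norm_setIntegral_le_of_norm_le_const (measure_lt_top μ _) fun y _ => hM _)
        linarith [hy.1.1, show y ≤ T from hy.2]
    _ ≤ B * μ.real univ + M * μ.real (Ioi T) := by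
        gcongr ?_ + ?_
        · exact mul_le_mul_of_nonneg_left (measureReal_mono (subset_univ _)) hB0
        · exact mul_le_mul_of_nonneg_left
            (measureReal_mono fun y hy => show T < y from lt_of_not_ge hy.2) hM0

theorem tendsto_zero_of_eq_setIntegral_Icc_comp_sub_add (ha : μ.real univ < 1) {w g : ℝ → ℝ}
    (hwm : Measurable w) {M : ℝ} (hM : ∀ t, |w t| ≤ M) (hg : Tendsto g atTop (𝓝 0))
    (heq : ∀ᶠ t in atTop, w t = (∫ y in Icc 0 t, w (t - y) ∂μ) + g t) :
    Tendsto w atTop (𝓝 0) := by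
  set a := μ.real univ
  set L := limsup (fun t => |w t|) atTop
  have hM0 : 0 ≤ M := (abs_nonneg _).trans (hM 0)
  have hbdd : IsBoundedUnder (· ≤ ·) atTop (fun t => |w t|) := isBoundedUnder_of ⟨M, hM⟩
  have hbdd' : IsBoundedUnder (· ≥ ·) atTop (fun t => |w t|) :=
    isBoundedUnder_of ⟨0, fun t => abs_nonneg _⟩
  have hLε : ∀ ε > 0, L ≤ a * (L + ε) + M * ε + ε := by
    intro ε hε
    obtain ⟨S, hS⟩ :=
      (eventually_lt_of_limsup_lt (lt_add_of_pos_right L hε) hbdd).exists_forall_of_atTop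
    obtain ⟨T, hT⟩ :=
      ((tendsto_measureReal_Ioi_atTop (μ := μ)).eventually (gt_mem_nhds hε)).exists
    refine limsup_le_of_le hbdd'.isCoboundedUnder_le ?_
    filter_upwards [heq, eventually_ge_atTop (S + T),
      ((tendsto_zero_iff_abs_tendsto_zero g).mp hg).eventually (gt_mem_nhds hε)] with t ht hST hgt
    rw [ht]
    calc _ ≤ |∫ y in Icc 0 t, w (t - y) ∂μ| + |g t| := abs_add_le _ _
      _ ≤ (L + ε) * a + M * μ.real (Ioi T) + ε :=
        add_le_add (abs_setIntegral_Icc_comp_sub_le hwm hM (fun s hs => (hS s hs).le) hST) hgt.le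
      _ ≤ a * (L + ε) + M * ε + ε := by nlinarith
  have hLa : L ≤ a * L := by
    have hlim : Tendsto (fun ε => a * (L + ε) + M * ε + ε) (𝓝[>] 0) (𝓝 (a * L)) :=
      tendsto_nhdsWithin_of_tendsto_nhds (by
        convert (by fun_prop : Continuous fun ε => a * (L + ε) + M * ε + ε).tendsto 0 using 2
        ring)
    exact ge_of_tendsto hlim (eventually_mem_nhdsWithin.mono hLε)
  have hL : L ≤ 0 := by nlinarith
  rw [tendsto_zero_iff_abs_tendsto_zero]
  exact tendsto_of_le_liminf_of_limsup_le
    (le_liminf_of_le hbdd.isCoboundedUnder_ge (.of_forall fun t => abs_nonneg _)) hL hbdd hbdd'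

end Renewal

theorem stmt5_general
    (μ : Measure ℝ) [IsFiniteMeasure μ]
    (hsupp : μ (Set.Iio 0) = 0)
    (a : ℝ) (ha : a = (μ Set.univ).toReal) (ha1 : a < 1)
    (h v : ℝ → ℝ) (hvm : Measurable v)
    (hvb : ∃ M : ℝ, ∀ t : ℝ, |v t| ≤ M)
    (c : ℝ) (hc : Tendsto h atTop (nhds c))
    (heq : ∀ t ≥ (0:ℝ), v t = (∫ y in Set.Icc 0 t, v (t - y) ∂μ) + h t) :
    Tendsto v atTop (nhds (c / (1 - a))) := by
  obtain ⟨M, hM⟩ := hvb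
  set k := c / (1 - a)
  have hk : k * a + c - k = 0 := by
    have : k * (1 - a) = c := div_mul_cancel₀ c (by linarith)
    linarith
  have hvk : ∀ t, |v t - k| ≤ M + |k| := fun t => (abs_sub _ _).trans (by gcongr; exact hM t)
  have hg : Tendsto (fun t => k * μ.real (Icc 0 t) + h t - k) atTop (𝓝 0) := by
    have := (((tendsto_measureReal_Icc_zero_atTop hsupp).const_mul k).add hc).sub_const k
    rwa [show μ.real univ = a from ha.symm, hk] at this
  have heqw : ∀ᶠ t in atTop,
      v t - k = (∫ y in Icc 0 t, (v (t - y) - k) ∂μ) + (k * μ.real (Icc 0 t) + h t - k) := by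
    filter_upwards [eventually_ge_atTop 0] with t ht
    rw [integral_sub (integrable_comp_sub_of_abs_le hvm hM t).integrableOn (integrable_const k),
      setIntegral_const, smul_eq_mul, heq t ht]
    ring
  have hw := tendsto_zero_of_eq_setIntegral_Icc_comp_sub_add (ha ▸ ha1 : (μ univ).toReal < 1)
    (hvm.sub_const k) hvk hg heqw
  simpa using hw.add_const k

/-- **Renewal limit lemma of Bellman–Harris.**
Let `μ` be a finite Borel measure on `[0,∞)` with `μ({0}) = 0` and total mass
`a = μ([0,∞)) < 1`. Let `h` be a bounded measurable function with `h(t) → c` as `t → ∞`,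
and let `v` be a bounded measurable function satisfying
`v(t) = ∫_{[0,t]} v(t-y) dμ(y) + h(t)` for all `t ≥ 0`. Then `v(t) → c/(1-a)`. -/
theorem stmt5
    (μ : Measure ℝ) [IsFiniteMeasure μ]
    (hsupp : μ (Set.Iio 0) = 0) (h0 : μ {0} = 0)
    (a : ℝ) (ha : a = (μ Set.univ).toReal) (ha1 : a < 1)
    (h v : ℝ → ℝ) (hhm : Measurable h) (hvm : Measurable v)
    (hhb : ∃ M : ℝ, ∀ t : ℝ, |h t| ≤ M) (hvb : ∃ M : ℝ, ∀ t : ℝ, |v t| ≤ M)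
    (c : ℝ) (hc : Tendsto h atTop (nhds c))
    (heq : ∀ t ≥ (0:ℝ), v t = (∫ y in Set.Icc 0 t, v (t - y) ∂μ) + h t) :
    Tendsto v atTop (nhds (c / (1 - a))) :=
  stmt5_general μ hsupp a ha ha1 h v hvm hvb c hc heq
end

section
/- Suppose m_f, m_g : [0,∞) → [0,∞) are measurable functions satisfying the renewal system m_f(t) = P((t,∞)) + ∫_{[0,t]} (m_f(t-τ) + m_g(t-τ)) dP(τ) and m_g(t) = ∫_{[0,t]} (m_f(t-τ) + m_g(t-τ)) dQ(τ) for all t ≥ 0, and suppose m_f(t) + m_g(t) ≤ C e^{βt} for some constants C, β ≥ 0. Let α > 0 be the real root of ψ. Then for every real s > max(α, β): ∫₀^∞ e^{-st} m_f(t) dt = (1-p*(s))(1-q*(s))/(s·ψ(s)) and ∫₀^∞ e^{-st} m_g(t) dt = (1-p*(s))q*(s)/(s·ψ(s)). -/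
/-!
Take Laplace transforms of the renewal system. Everything is nonnegative, so we work with
`ℝ≥0∞`-valued transforms, where Tonelli applies without integrability conditions: convolution
with `P` (resp. `Q`) becomes multiplication by `p*(s)` (resp. `q*(s)`), and the survival term
`P((t,∞)) = 1 - P([0,t])` transforms to `(1 - p*(s))/s`. The growth bound makes the transforms
`F`, `G` finite for `s > β`, leaving the linear system `F = (1 - p*)/s + p* (F + G)`,
`G = q* (F + G)`. Adding the equations gives `s ψ(s) (F + G) = 1 - p*(s) > 0`, so `ψ(s) ≠ 0`
and the system can be solved.
-/

open MeasureTheory Set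

open scoped ENNReal

noncomputable def laplace (f : ℝ → ℝ≥0∞) (s : ℝ) : ℝ≥0∞ :=
  ∫⁻ t in Ici 0, ENNReal.ofReal (Real.exp (-s * t)) * f t

lemma measurable_ofReal_exp_neg_mul (s : ℝ) :
    Measurable fun t : ℝ => ENNReal.ofReal (Real.exp (-s * t)) := by
  fun_prop

lemma laplace_congr {f g : ℝ → ℝ≥0∞} (h : ∀ t ≥ 0, f t = g t) (s : ℝ) :
    laplace f s = laplace g s :=
  setLIntegral_congr_fun measurableSet_Ici fun t ht => by rw [h t ht]

lemma laplace_add {f : ℝ → ℝ≥0∞} (hf : Measurable f) (g : ℝ → ℝ≥0∞) (s : ℝ) :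
    laplace (fun t => f t + g t) s = laplace f s + laplace g s := by
  simp only [laplace, mul_add]
  exact lintegral_add_left ((measurable_ofReal_exp_neg_mul s).mul hf) _

lemma laplace_one {s : ℝ} (hs : 0 < s) : laplace (fun _ => 1) s = ENNReal.ofReal s⁻¹ := by
  have hint : IntegrableOn (fun t => Real.exp (-s * t)) (Ici 0) := by
    rw [integrableOn_Ici_iff_integrableOn_Ioi]
    exact exp_neg_integrableOn_Ioi 0 hs
  simp only [laplace, mul_one]
  rw [← ofReal_integral_eq_lintegral_ofReal hint (ae_of_all _ fun _ => (Real.exp_pos _).le),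
    integral_Ici_eq_integral_Ioi, integral_exp_mul_Ioi (neg_lt_zero.2 hs)]
  simp

lemma lintegral_Ici_comp_add_right (f : ℝ → ℝ≥0∞) (τ : ℝ) :
    ∫⁻ u in Ici 0, f (u + τ) = ∫⁻ t in Ici τ, f t := by
  have := (measurePreserving_add_right volume τ).setLIntegral_comp_preimage_emb
    (measurableEmbedding_addRight τ) f (Ici τ)
  rwa [preimage_add_const_Ici, sub_self] at this

lemma laplace_convolution (μ : Measure ℝ) [SFinite μ] (hμ : ∀ᵐ τ ∂μ, 0 ≤ τ)
    {m : ℝ → ℝ≥0∞} (hm : Measurable m) (s : ℝ) :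
    laplace (fun t => ∫⁻ τ in Icc 0 t, m (t - τ) ∂μ) s =
      (∫⁻ τ, ENNReal.ofReal (Real.exp (-s * τ)) ∂μ) * laplace m s := by
  set e := fun t : ℝ => ENNReal.ofReal (Real.exp (-s * t))
  have he : Measurable e := measurable_ofReal_exp_neg_mul s
  set S : Set (ℝ × ℝ) := {p | 0 ≤ p.2} ∩ {p | p.2 ≤ p.1}
  have hS : MeasurableSet S :=
    (measurableSet_le measurable_const measurable_snd).inter
      (measurableSet_le measurable_snd measurable_fst)
  set k : ℝ × ℝ → ℝ≥0∞ := S.indicator fun p => e p.1 * m (p.1 - p.2)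
  have hk : Measurable k := ((he.comp measurable_fst).mul (hm.comp (by fun_prop))).indicator hS
  have inner : ∀ τ ≥ 0, ∫⁻ t in Ici 0, k (t, τ) = e τ * laplace m s := by
    intro τ hτ
    calc ∫⁻ t in Ici 0, k (t, τ)
        = ∫⁻ t in Ici 0, (Ici τ).indicator (fun t => e t * m (t - τ)) t := by
          refine lintegral_congr fun t => ?_
          simp [k, S, indicator_apply, hτ]
      _ = ∫⁻ u in Ici 0, e (u + τ) * m u := by
          rw [setLIntegral_indicator measurableSet_Ici, Ici_inter_Ici, max_eq_left hτ,
            ← lintegral_Ici_comp_add_right]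
          simp only [add_sub_cancel_right]
      _ = e τ * laplace m s := by
          rw [laplace, ← lintegral_const_mul' _ _ ENNReal.ofReal_ne_top]
          refine lintegral_congr fun u => ?_
          simp only [e, mul_add, add_comm (-s * u), Real.exp_add,
            ENNReal.ofReal_mul (Real.exp_pos _).le, mul_assoc]
  calc laplace (fun t => ∫⁻ τ in Icc 0 t, m (t - τ) ∂μ) s
      = ∫⁻ t in Ici 0, ∫⁻ τ, k (t, τ) ∂μ := by
        refine lintegral_congr fun t => ?_
        rw [← lintegral_const_mul' _ _ ENNReal.ofReal_ne_top,
          ← lintegral_indicator measurableSet_Icc]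
        rfl
    _ = ∫⁻ τ, (∫⁻ t in Ici 0, k (t, τ)) ∂μ :=
        lintegral_lintegral_swap (μ := volume.restrict (Ici (0:ℝ))) (ν := μ)
          (f := fun t τ => k (t, τ)) hk.aemeasurable
    _ = ∫⁻ τ, e τ * laplace m s ∂μ := lintegral_congr_ae (hμ.mono inner)
    _ = _ := lintegral_mul_const _ he

lemma integrable_exp_neg_mul (μ : Measure ℝ) [IsFiniteMeasure μ] (hμ : ∀ᵐ τ ∂μ, 0 ≤ τ)
    {s : ℝ} (hs : 0 ≤ s) : Integrable (fun τ => Real.exp (-s * τ)) μ := by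
  refine .of_bound (by fun_prop) 1 (hμ.mono fun τ hτ => ?_)
  rw [Real.norm_of_nonneg (Real.exp_pos _).le, Real.exp_le_one_iff]
  nlinarith

lemma ofReal_integral_exp_neg_mul (μ : Measure ℝ) [IsFiniteMeasure μ] (hμ : ∀ᵐ τ ∂μ, 0 ≤ τ)
    {s : ℝ} (hs : 0 ≤ s) :
    ENNReal.ofReal (∫ τ, Real.exp (-s * τ) ∂μ) = ∫⁻ τ, ENNReal.ofReal (Real.exp (-s * τ)) ∂μ :=
  ofReal_integral_eq_lintegral_ofReal (integrable_exp_neg_mul μ hμ hs)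
    (ae_of_all _ fun _ => (Real.exp_pos _).le)

lemma integral_exp_neg_mul_lt_one (μ : Measure ℝ) [IsProbabilityMeasure μ]
    (hμ : ∀ᵐ τ ∂μ, 0 < τ) {s : ℝ} (hs : 0 < s) : ∫ τ, Real.exp (-s * τ) ∂μ < 1 := by
  have hint := integrable_exp_neg_mul μ (hμ.mono fun _ => le_of_lt) hs.le
  have hlt : ∀ τ, 0 < τ → Real.exp (-s * τ) < 1 := fun τ hτ => by
    rw [Real.exp_lt_one_iff]; nlinarith
  have hpos : 0 < ∫ τ, (1 - Real.exp (-s * τ)) ∂μ := by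
    rw [integral_pos_iff_support_of_nonneg_ae
      (hμ.mono fun τ hτ => sub_nonneg.2 (hlt τ hτ).le) ((integrable_const 1).sub hint)]
    have hIoi : μ (Ioi 0) = 1 := by
      rw [← measure_univ (μ := μ)]
      exact (ae_mem_iff_measure_eq measurableSet_Ioi.nullMeasurableSet).1 hμ
    refine (zero_lt_one.trans_eq hIoi.symm).trans_le (measure_mono fun τ hτ => ?_)
    exact (sub_pos.2 (hlt τ hτ)).ne'
  rw [integral_sub (integrable_const 1) hint] at hpos
  simpa using hpos

lemma measurable_measure_Ioi (μ : Measure ℝ) : Measurable fun t => μ (Ioi t) :=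
  Antitone.measurable fun _ _ hab => measure_mono (Ioi_subset_Ioi hab)

lemma laplace_survival (μ : Measure ℝ) [IsProbabilityMeasure μ] (hμ : ∀ᵐ τ ∂μ, 0 ≤ τ)
    {s : ℝ} (hs : 0 < s) :
    laplace (fun t => μ (Ioi t)) s = ENNReal.ofReal ((1 - ∫ τ, Real.exp (-s * τ) ∂μ) / s) := by
  -- `μ (Ioi t) = 1 - μ (Icc 0 t)`, and `t ↦ μ (Icc 0 t)` is the convolution of `μ` with `1`.
  have hsplit : laplace (fun t => μ (Ioi t)) s +
      (∫⁻ τ, ENNReal.ofReal (Real.exp (-s * τ)) ∂μ) * laplace (fun _ => 1) s =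
        laplace (fun _ => 1) s := by
    rw [← laplace_convolution μ hμ measurable_const, ← laplace_add (measurable_measure_Ioi μ)]
    refine laplace_congr (fun t ht => ?_) s
    have hdisj : Disjoint (Ioi t) (Icc 0 t) := disjoint_left.2 fun _ h1 h2 => not_lt.2 h2.2 h1
    rw [setLIntegral_one, ← measure_union hdisj measurableSet_Icc,
      union_comm, Icc_union_Ioi_eq_Ici ht, ← measure_univ (μ := μ)]
    exact (ae_mem_iff_measure_eq measurableSet_Ici.nullMeasurableSet).1 hμ
  have hp0 : 0 ≤ ∫ τ, Real.exp (-s * τ) ∂μ := integral_nonneg fun _ => (Real.exp_pos _).le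
  rw [← ofReal_integral_exp_neg_mul μ hμ hs.le, laplace_one hs, ← ENNReal.ofReal_mul hp0] at hsplit
  rw [ENNReal.eq_sub_of_add_eq ENNReal.ofReal_ne_top hsplit,
    ← ENNReal.ofReal_sub _ (mul_nonneg hp0 (inv_nonneg.2 hs.le))]
  congr 1
  ring

lemma ofReal_setIntegral_Icc_comp_sub (μ : Measure ℝ) [IsFiniteMeasure μ] {h : ℝ → ℝ}
    (hh : Measurable h) (h0 : ∀ u, 0 ≤ h u) {C β : ℝ}
    (hgrow : ∀ u ≥ 0, h u ≤ C * Real.exp (β * u)) (t : ℝ) :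
    ENNReal.ofReal (∫ τ in Icc 0 t, h (t - τ) ∂μ) =
      ∫⁻ τ in Icc 0 t, ENNReal.ofReal (h (t - τ)) ∂μ := by
  refine ofReal_integral_eq_lintegral_ofReal ?_ (ae_of_all _ fun _ => h0 _)
  have hbound : IntegrableOn (fun τ => C * Real.exp (β * (t - τ))) (Icc 0 t) μ :=
    (by fun_prop : Continuous fun τ => C * Real.exp (β * (t - τ))).continuousOn.integrableOn_compact
      isCompact_Icc
  refine hbound.mono' (hh.comp (by fun_prop)).aestronglyMeasurable ?_
  filter_upwards [ae_restrict_mem measurableSet_Icc] with τ hτ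
  rw [Real.norm_of_nonneg (h0 _)]
  exact hgrow _ (sub_nonneg.2 hτ.2)

lemma laplace_ofReal_lt_top {h : ℝ → ℝ} {C β s : ℝ}
    (hgrow : ∀ t ≥ 0, h t ≤ C * Real.exp (β * t)) (hs : β < s) :
    laplace (fun t => ENNReal.ofReal (h t)) s < ∞ := by
  have hint : IntegrableOn (fun t => C * Real.exp (-(s - β) * t)) (Ici 0) := by
    rw [integrableOn_Ici_iff_integrableOn_Ioi]
    exact (exp_neg_integrableOn_Ioi 0 (sub_pos.2 hs)).const_mul C
  refine lt_of_le_of_lt (setLIntegral_mono (by fun_prop) fun t ht => ?_) hint.lintegral_lt_top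
  rw [← ENNReal.ofReal_mul (Real.exp_pos _).le]
  refine ENNReal.ofReal_le_ofReal ?_
  calc Real.exp (-s * t) * h t ≤ Real.exp (-s * t) * (C * Real.exp (β * t)) :=
        mul_le_mul_of_nonneg_left (hgrow t ht) (Real.exp_pos _).le
    _ = C * Real.exp (-(s - β) * t) := by
        rw [show -(s - β) * t = -s * t + β * t by ring, Real.exp_add]; ring

lemma integral_Ioi_exp_neg_mul_eq_toReal_laplace {m : ℝ → ℝ} (hm : Measurable m)
    (h0 : ∀ t, 0 ≤ m t) (s : ℝ) :
    ∫ t in Ioi 0, Real.exp (-s * t) * m t = (laplace (fun t => ENNReal.ofReal (m t)) s).toReal := by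
  rw [← integral_Ici_eq_integral_Ioi, integral_eq_lintegral_of_nonneg_ae
    (ae_of_all _ fun t => mul_nonneg (Real.exp_pos _).le (h0 t)) (by fun_prop), laplace]
  simp_rw [ENNReal.ofReal_mul (Real.exp_pos _).le]

lemma laplace_ofReal_convolution (μ : Measure ℝ) [IsFiniteMeasure μ] (hμ : ∀ᵐ τ ∂μ, 0 ≤ τ)
    {s : ℝ} (hs : 0 ≤ s) {h : ℝ → ℝ} (hh : Measurable h) (h0 : ∀ u, 0 ≤ h u) {C β : ℝ}
    (hgrow : ∀ u ≥ 0, h u ≤ C * Real.exp (β * u)) :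
    laplace (fun t => ENNReal.ofReal (∫ τ in Icc 0 t, h (t - τ) ∂μ)) s =
      ENNReal.ofReal (∫ τ, Real.exp (-s * τ) ∂μ) * laplace (fun t => ENNReal.ofReal (h t)) s := by
  simp_rw [ofReal_setIntegral_Icc_comp_sub μ hh h0 hgrow, ofReal_integral_exp_neg_mul μ hμ hs]
  exact laplace_convolution μ hμ hh.ennreal_ofReal s

lemma renewal_system_solution {s p q f g : ℝ} (hs : 0 < s) (hp : p < 1)
    (hf : f = (1 - p) / s + p * (f + g)) (hg : g = q * (f + g)) :
    f = (1 - p) * (1 - q) / (s * (1 - p - q)) ∧ g = (1 - p) * q / (s * (1 - p - q)) := by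
  have hf' : s * f = 1 - p + s * p * (f + g) := by
    field_simp at hf
    linear_combination hf
  have hdet : s * (1 - p - q) * (f + g) = 1 - p := by linear_combination hf' + s * hg
  have hne : s * (1 - p - q) ≠ 0 := fun h => by
    rw [h, zero_mul] at hdet
    linarith
  rw [eq_div_iff hne, eq_div_iff hne]
  exact ⟨by linear_combination (1 - q) * hf' + p * s * hg,
    by linear_combination q * hf' + s * (1 - p) * hg⟩

lemma renewal_system_toReal_solution {s p q : ℝ} {F G : ℝ≥0∞} (hs : 0 < s) (hp0 : 0 ≤ p)
    (hp : p < 1) (hq0 : 0 ≤ q) (hFG : F + G ≠ ∞)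
    (hF : F = ENNReal.ofReal ((1 - p) / s) + ENNReal.ofReal p * (F + G))
    (hG : G = ENNReal.ofReal q * (F + G)) :
    F.toReal = (1 - p) * (1 - q) / (s * (1 - p - q)) ∧
      G.toReal = (1 - p) * q / (s * (1 - p - q)) := by
  obtain ⟨hF_ne_top, hG_ne_top⟩ := ENNReal.add_ne_top.1 hFG
  refine renewal_system_solution hs hp ?_ ?_
  · have := congrArg ENNReal.toReal hF
    rwa [ENNReal.toReal_add ENNReal.ofReal_ne_top (ENNReal.mul_ne_top ENNReal.ofReal_ne_top hFG),
      ENNReal.toReal_mul, ENNReal.toReal_ofReal (div_nonneg (by linarith) hs.le),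
      ENNReal.toReal_ofReal hp0, ENNReal.toReal_add hF_ne_top hG_ne_top] at this
  · have := congrArg ENNReal.toReal hG
    rwa [ENNReal.toReal_mul, ENNReal.toReal_ofReal hq0,
      ENNReal.toReal_add hF_ne_top hG_ne_top] at this

theorem stmt6_general
    (P Q : Measure ℝ) [IsProbabilityMeasure P] [IsProbabilityMeasure Q]
    (hP : P (Set.Iic 0) = 0) (hQ : Q (Set.Iic 0) = 0)
    (pstar qstar ψ : ℝ → ℝ)
    (hpstar : ∀ s : ℝ, pstar s = ∫ t, Real.exp (-s * t) ∂P)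
    (hqstar : ∀ s : ℝ, qstar s = ∫ t, Real.exp (-s * t) ∂Q)
    (hψ : ∀ s : ℝ, ψ s = 1 - pstar s - qstar s)
    (m_f m_g : ℝ → ℝ) (hmf : Measurable m_f) (hmg : Measurable m_g)
    (hnnf : ∀ t, 0 ≤ m_f t) (hnng : ∀ t, 0 ≤ m_g t)
    (heqf : ∀ t ≥ (0:ℝ), m_f t =
      (P (Set.Ioi t)).toReal + ∫ τ in Set.Icc 0 t, (m_f (t - τ) + m_g (t - τ)) ∂P)
    (heqg : ∀ t ≥ (0:ℝ), m_g t =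
      ∫ τ in Set.Icc 0 t, (m_f (t - τ) + m_g (t - τ)) ∂Q)
    (C β : ℝ)
    (hgrow : ∀ t ≥ (0:ℝ), m_f t + m_g t ≤ C * Real.exp (β * t))
    (α : ℝ) (hα : 0 < α) :
    ∀ s : ℝ, max α β < s →
      (∫ t in Set.Ioi (0:ℝ), Real.exp (-s * t) * m_f t) =
        (1 - pstar s) * (1 - qstar s) / (s * ψ s) ∧
      (∫ t in Set.Ioi (0:ℝ), Real.exp (-s * t) * m_g t) =
        (1 - pstar s) * qstar s / (s * ψ s) := by
  intro s hs
  have hs0 : 0 < s := hα.trans ((le_max_left α β).trans_lt hs)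
  have hPpos : ∀ᵐ τ ∂P, 0 < τ := (measure_eq_zero_iff_ae_notMem.1 hP).mono fun _ hτ => not_le.1 hτ
  have hPnn : ∀ᵐ τ ∂P, 0 ≤ τ := hPpos.mono fun _ => le_of_lt
  have hQnn : ∀ᵐ τ ∂Q, 0 ≤ τ :=
    (measure_eq_zero_iff_ae_notMem.1 hQ).mono fun _ hτ => (not_le.1 hτ).le
  have hsum : Measurable fun t => m_f t + m_g t := hmf.add hmg
  have hsum0 : ∀ t, 0 ≤ m_f t + m_g t := fun t => add_nonneg (hnnf t) (hnng t)
  set F := laplace (fun t => ENNReal.ofReal (m_f t)) s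
  set G := laplace (fun t => ENNReal.ofReal (m_g t)) s
  have hFG : laplace (fun t => ENNReal.ofReal (m_f t + m_g t)) s = F + G := by
    simp_rw [ENNReal.ofReal_add (hnnf _) (hnng _)]
    exact laplace_add hmf.ennreal_ofReal _ s
  have hG : G = ENNReal.ofReal (qstar s) * (F + G) := by
    rw [← hFG, hqstar, ← laplace_ofReal_convolution Q hQnn hs0.le hsum hsum0 hgrow]
    exact laplace_congr (fun t ht => by rw [heqg t ht]) s
  have hF : F = ENNReal.ofReal ((1 - pstar s) / s) + ENNReal.ofReal (pstar s) * (F + G) := by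
    rw [← hFG, hpstar, ← laplace_survival P hPnn hs0,
      ← laplace_ofReal_convolution P hPnn hs0.le hsum hsum0 hgrow,
      ← laplace_add (measurable_measure_Ioi P)]
    refine laplace_congr (fun t ht => ?_) s
    rw [heqf t ht, ENNReal.ofReal_add ENNReal.toReal_nonneg (integral_nonneg fun _ => hsum0 _),
      ENNReal.ofReal_toReal (measure_ne_top P _)]
  have hp0 : 0 ≤ pstar s := hpstar s ▸ integral_nonneg fun _ => (Real.exp_pos _).le
  have hp1 : pstar s < 1 := hpstar s ▸ integral_exp_neg_mul_lt_one P hPpos hs0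
  have hq0 : 0 ≤ qstar s := hqstar s ▸ integral_nonneg fun _ => (Real.exp_pos _).le
  rw [integral_Ioi_exp_neg_mul_eq_toReal_laplace hmf hnnf,
    integral_Ioi_exp_neg_mul_eq_toReal_laplace hmg hnng, hψ]
  exact renewal_system_toReal_solution hs0 hp0 hp1 hq0
    (hFG ▸ (laplace_ofReal_lt_top hgrow ((le_max_right α β).trans_lt hs)).ne) hF hG

/-- Suppose `m_f, m_g : [0,∞) → [0,∞)` are measurable and satisfy the
renewal system
`m_f(t) = P((t,∞)) + ∫_{[0,t]} (m_f(t-τ) + m_g(t-τ)) dP(τ)`,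
`m_g(t) = ∫_{[0,t]} (m_f(t-τ) + m_g(t-τ)) dQ(τ)` for `t ≥ 0`, with
`m_f(t) + m_g(t) ≤ C e^{βt}`. Let `α > 0` be the real root of `ψ`. Then for every real
`s > max(α, β)`:
`∫₀^∞ e^{-st} m_f(t) dt = (1-p*(s))(1-q*(s))/(s ψ(s))` and
`∫₀^∞ e^{-st} m_g(t) dt = (1-p*(s)) q*(s)/(s ψ(s))`. -/
theorem stmt6
    (P Q : Measure ℝ) [IsProbabilityMeasure P] [IsProbabilityMeasure Q]
    (hP : P (Set.Iic 0) = 0) (hQ : Q (Set.Iic 0) = 0)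
    (pstar qstar ψ : ℝ → ℝ)
    (hpstar : ∀ s : ℝ, pstar s = ∫ t, Real.exp (-s * t) ∂P)
    (hqstar : ∀ s : ℝ, qstar s = ∫ t, Real.exp (-s * t) ∂Q)
    (hψ : ∀ s : ℝ, ψ s = 1 - pstar s - qstar s)
    (m_f m_g : ℝ → ℝ) (hmf : Measurable m_f) (hmg : Measurable m_g)
    (hnnf : ∀ t, 0 ≤ m_f t) (hnng : ∀ t, 0 ≤ m_g t)
    (heqf : ∀ t ≥ (0:ℝ), m_f t =
      (P (Set.Ioi t)).toReal + ∫ τ in Set.Icc 0 t, (m_f (t - τ) + m_g (t - τ)) ∂P)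
    (heqg : ∀ t ≥ (0:ℝ), m_g t =
      ∫ τ in Set.Icc 0 t, (m_f (t - τ) + m_g (t - τ)) ∂Q)
    (C β : ℝ) (hC : 0 ≤ C) (hβ : 0 ≤ β)
    (hgrow : ∀ t ≥ (0:ℝ), m_f t + m_g t ≤ C * Real.exp (β * t))
    (α : ℝ) (hα : 0 < α) (hroot : ψ α = 0) :
    ∀ s : ℝ, max α β < s →
      (∫ t in Set.Ioi (0:ℝ), Real.exp (-s * t) * m_f t) =
        (1 - pstar s) * (1 - qstar s) / (s * ψ s) ∧
      (∫ t in Set.Ioi (0:ℝ), Real.exp (-s * t) * m_g t) =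
        (1 - pstar s) * qstar s / (s * ψ s) :=
  stmt6_general P Q hP hQ pstar qstar ψ hpstar hqstar hψ m_f m_g hmf hmg hnnf hnng heqf heqg C β
    hgrow α hα
end

section
/- Define functions c_k, b_k : [0,∞) → [0,∞) recursively by c_1(t) = P((t,∞)), b_1(t) = Q((t,∞)), and for k ≥ 2, c_k(t) = ∫_{[0,t]} Σ_{j=1}^{k-1} c_j(t-τ) b_{k-j}(t-τ) dP(τ) and b_k(t) = ∫_{[0,t]} Σ_{j=1}^{k-1} c_j(t-τ) b_{k-j}(t-τ) dQ(τ). Then for every t ≥ 0, Σ_{k=1}^∞ c_k(t) = 1 and Σ_{k=1}^∞ b_k(t) = 1. (Thus for each t, (c_k(t))_{k≥1} and (b_k(t))_{k≥1} are the coefficient sequences of probability generating functions: the distributions of the total cell population at time t starting from a single mother cell, respectively a single daughter cell.) -/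
open MeasureTheory Set Filter
open scoped ENNReal

/-! Write `C t = ∑ₖ c_k(t)` and `B t = ∑ₖ b_k(t)`. By induction on `N` the partial sums are at
most `1`, so `C, B ≤ 1`. The Cauchy product formula and monotone convergence turn the recursion
into the renewal equation `C t = P (t,∞) + ∫_{[0,t]} C(t-τ) B(t-τ) dP(τ)`, and likewise for `B`
with `Q`. Since `P (t,∞) + P [0,t] = 1` and `1 - xy ≤ (1 - x) + (1 - y)` for `x ≤ 1`, the defect
`w = (1 - C) + (1 - B)` satisfies `w t ≤ ∫_{[0,t]} w(t-τ) d(P+Q)(τ)`. As `P + Q` has no atom at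
`0`, some `[0,ε]` has `(P+Q)`-mass `δ < 1`; then `sup_{[0,T+ε)} w ≤ δ · sup_{[0,T+ε)} w` as soon
as `w = 0` on `[0,T)`, so the bounded function `w` vanishes on `[0,nε)` for every `n`. -/

/-- The `k`-th coefficient of `(∑_{j ≥ 1} f j X^j) * (∑_{j ≥ 1} g j X^j)`; the values `f 0`, `g 0`
do not enter. -/
def coeffMul {R : Type*} [AddCommMonoid R] [Mul R] (f g : ℕ → R) (k : ℕ) : R :=
  ∑ j ∈ Finset.Ico 1 k, f j * g (k - j)

lemma coeffMul_add_two {R : Type*} [AddCommMonoid R] [Mul R] (f g : ℕ → R) (n : ℕ) :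
    coeffMul f g (n + 2) = ∑ i ∈ Finset.range (n + 1), f (i + 1) * g (n - i + 1) := by
  rw [coeffMul, Finset.sum_Ico_eq_sum_range]
  refine Finset.sum_congr rfl fun i hi => ?_
  rw [Finset.mem_range] at hi
  rw [add_comm 1 i, show n + 2 - (i + 1) = n - i + 1 by omega]

lemma ENNReal.tsum_mul_tsum_eq_tsum_sum_antidiagonal (f g : ℕ → ℝ≥0∞) :
    (∑' n, f n) * ∑' n, g n =
      ∑' n, ∑ kl ∈ Finset.HasAntidiagonal.antidiagonal n, f kl.1 * g kl.2 := by
  rw [← ENNReal.tsum_mul_right]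
  simp_rw [← ENNReal.tsum_mul_left]
  rw [← ENNReal.tsum_prod, ← Finset.HasAntidiagonal.sigmaAntidiagonalEquivProd.tsum_eq,
    ENNReal.tsum_sigma']
  simp_rw [← Finset.tsum_subtype]
  rfl

lemma ENNReal.tsum_coeffMul_add_two (f g : ℕ → ℝ≥0∞) :
    ∑' n, coeffMul f g (n + 2) = (∑' n, f (n + 1)) * ∑' n, g (n + 1) := by
  simp_rw [coeffMul_add_two, ENNReal.tsum_mul_tsum_eq_tsum_sum_antidiagonal,
    Finset.Nat.sum_antidiagonal_eq_sum_range_succ fun k l => f (k + 1) * g (l + 1)]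

lemma ENNReal.sum_range_coeffMul_add_two_le (f g : ℕ → ℝ≥0∞) (N : ℕ) :
    ∑ n ∈ Finset.range N, coeffMul f g (n + 2)
      ≤ (∑ n ∈ Finset.range N, f (n + 1)) * ∑ n ∈ Finset.range N, g (n + 1) := by
  simp_rw [coeffMul_add_two, Finset.sum_range_diag_flip N fun i k => f (i + 1) * g (k + 1),
    Finset.sum_mul_sum]
  exact Finset.sum_le_sum fun i _ =>
    Finset.sum_le_sum_of_subset (Finset.range_subset_range.2 (Nat.sub_le N i))

lemma ENNReal.one_sub_mul_le {a : ℝ≥0∞} (ha : a ≤ 1) (b : ℝ≥0∞) :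
    1 - a * b ≤ (1 - a) + (1 - b) :=
  calc 1 - a * b ≤ (1 - a) + (a - a * b) := tsub_le_tsub_add_tsub
    _ = (1 - a) + a * (1 - b) := by
      rw [ENNReal.mul_sub fun _ _ => ne_top_of_le_ne_top ENNReal.one_ne_top ha, mul_one]
    _ ≤ (1 - a) + (1 - b) := by gcongr; exact mul_le_of_le_one_left' ha

lemma measurable_coeffMul {α : Type*} [MeasurableSpace α] {f g : ℕ → α → ℝ≥0∞} {k : ℕ}
    (hf : ∀ j, 1 ≤ j → j < k → Measurable (f j)) (hg : ∀ j, 1 ≤ j → j < k → Measurable (g j)) :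
    Measurable fun y => coeffMul (f · y) (g · y) k :=
  Finset.measurable_sum _ fun j hj => by
    rw [Finset.mem_Ico] at hj
    exact (hf j hj.1 hj.2).mul (hg (k - j) (by omega) (by omega))

lemma measure_Ioi_add_measure_Icc (ν : Measure ℝ) [IsProbabilityMeasure ν] (hν : ν (Iic 0) = 0)
    (t : ℝ) : ν (Ioi t) + ν (Icc 0 t) = 1 := by
  have hIcc : ν (Icc 0 t) = ν (Iic t) := by
    rw [← measure_sdiff_null (s := Iic t) (measure_mono_null Iio_subset_Iic_self hν)]
    congr 1
    ext x
    simp [and_comm]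
  rw [hIcc, ← compl_Iic, add_comm, measure_add_measure_compl measurableSet_Iic, measure_univ]

lemma measurable_setLIntegral_Icc_sub (ν : Measure ℝ) [SFinite ν] {F : ℝ → ℝ≥0∞}
    (hF : Measurable F) : Measurable fun t => ∫⁻ τ in Icc 0 t, F (t - τ) ∂ν := by
  have hS : MeasurableSet {p : ℝ × ℝ | p.2 ∈ Icc 0 p.1} :=
    (measurableSet_le measurable_const measurable_snd).inter
      (measurableSet_le measurable_snd measurable_fst)
  simp_rw [← lintegral_indicator measurableSet_Icc]
  exact Measurable.lintegral_prod_right'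
    (f := {p : ℝ × ℝ | p.2 ∈ Icc 0 p.1}.indicator fun p => F (p.1 - p.2))
    ((hF.comp (measurable_fst.sub measurable_snd)).indicator hS)

lemma ENNReal.eq_zero_of_le_mul_of_lt_one {s δ : ℝ≥0∞} (hs : s ≠ ∞) (hδ : δ < 1)
    (h : s ≤ s * δ) : s = 0 := by
  by_contra hs0
  exact not_le.2 hδ ((ENNReal.mul_le_mul_iff_right hs0 hs).1 (by rwa [mul_one]))

section Renewal

variable {μ : Measure ℝ} {w : ℝ → ℝ≥0∞} {M : ℝ≥0∞}

lemma eqOn_zero_Ico_add_of_le_setLIntegral_Icc_sub {ε T : ℝ} (hδ : μ (Icc 0 ε) < 1)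
    (hM : M ≠ ∞) (hwM : ∀ t, 0 ≤ t → w t ≤ M)
    (hw : ∀ t, 0 ≤ t → w t ≤ ∫⁻ τ in Icc 0 t, w (t - τ) ∂μ) (hT : EqOn w 0 (Ico 0 T)) :
    EqOn w 0 (Ico 0 (T + ε)) := by
  set s := ⨆ x ∈ Ico 0 (T + ε), w x
  have hws : ∀ x ∈ Ico 0 (T + ε), w x ≤ s := fun x hx => le_iSup₂ (f := fun x _ => w x) x hx
  have hs : s ≠ ∞ := ne_top_of_le_ne_top hM (iSup₂_le fun x hx => hwM x hx.1)
  have hle : ∀ x ∈ Ico 0 (T + ε), w x ≤ s * μ (Icc 0 ε) := fun x hx =>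
    calc w x ≤ ∫⁻ τ in Icc 0 x, w (x - τ) ∂μ := hw x hx.1
      _ ≤ ∫⁻ τ in Icc 0 x, (Icc 0 ε).indicator (fun _ => s) τ ∂μ := by
        refine setLIntegral_mono' measurableSet_Icc fun τ hτ => ?_
        by_cases hxτ : x - τ < T
        · rw [hT ⟨sub_nonneg.2 hτ.2, hxτ⟩]
          exact zero_le
        · rw [indicator_of_mem (show τ ∈ Icc 0 ε from ⟨hτ.1, by linarith [hx.2]⟩)]
          exact hws _ ⟨sub_nonneg.2 hτ.2, by linarith [hτ.1, hx.2]⟩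
      _ ≤ ∫⁻ τ, (Icc 0 ε).indicator (fun _ => s) τ ∂μ := setLIntegral_le_lintegral _ _
      _ = s * μ (Icc 0 ε) := lintegral_indicator_const measurableSet_Icc s
  have hs0 : s = 0 := ENNReal.eq_zero_of_le_mul_of_lt_one hs hδ (iSup₂_le hle)
  exact fun x hx => le_antisymm ((hws x hx).trans hs0.le) zero_le

theorem eq_zero_of_le_setLIntegral_Icc_sub [IsFiniteMeasureOnCompacts μ] (hμ : μ {0} = 0)
    (hM : M ≠ ∞) (hwM : ∀ t, 0 ≤ t → w t ≤ M)
    (hw : ∀ t, 0 ≤ t → w t ≤ ∫⁻ τ in Icc 0 t, w (t - τ) ∂μ) {t : ℝ} (ht : 0 ≤ t) : w t = 0 := by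
  obtain ⟨ε, hε, hδ⟩ : ∃ ε > 0, μ (Icc 0 ε) < 1 := by
    have hlim := tendsto_measure_Icc_nhdsWithin_right' μ 0
    rw [hμ] at hlim
    obtain ⟨ε, hlt, hε⟩ := ((hlim.eventually (gt_mem_nhds zero_lt_one)).and
      self_mem_nhdsWithin).exists
    exact ⟨ε, hε, (measure_mono (Icc_subset_Icc (by linarith) (by simp))).trans_lt hlt⟩
  have hvanish : ∀ n : ℕ, EqOn w 0 (Ico 0 (n * ε)) := by
    intro n
    induction n with
    | zero => simp
    | succ n ih =>
      rw [Nat.cast_succ, add_one_mul]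
      exact eqOn_zero_Ico_add_of_le_setLIntegral_Icc_sub hδ hM hwM hw ih
  obtain ⟨n, hn⟩ := exists_nat_gt (t / ε)
  exact hvanish n ⟨ht, (div_lt_iff₀ hε).1 hn⟩

end Renewal

/-- The recursion of a cell with lifespan law `ν` that divides into a mother cell, whose
population-size distribution is `c`, and a daughter cell, with distribution `b`; `a k t` is the
probability of `k` cells at time `t`. -/
structure IsDivisionRecursion (ν : Measure ℝ) (a c b : ℕ → ℝ → ℝ≥0∞) : Prop where
  one : ∀ t ≥ (0:ℝ), a 1 t = ν (Ioi t)
  step : ∀ k : ℕ, 2 ≤ k → ∀ t ≥ (0:ℝ), a k t =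
    ∫⁻ τ in Icc 0 t, coeffMul (c · (t - τ)) (b · (t - τ)) k ∂ν

namespace IsDivisionRecursion

variable {ν : Measure ℝ} {a c b : ℕ → ℝ → ℝ≥0∞}

lemma sum_range_succ_le_one [IsProbabilityMeasure ν] (hν : ν (Iic 0) = 0)
    (ha : IsDivisionRecursion ν a c b)
    (hc : ∀ k, 1 ≤ k → Measurable (c k)) (hb : ∀ k, 1 ≤ k → Measurable (b k)) {N : ℕ}
    (hN : ∀ y, 0 ≤ y →
      ∑ k ∈ Finset.range N, c (k + 1) y ≤ 1 ∧ ∑ k ∈ Finset.range N, b (k + 1) y ≤ 1)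
    {t : ℝ} (ht : 0 ≤ t) : ∑ k ∈ Finset.range (N + 1), a (k + 1) t ≤ 1 := by
  have hmeas : ∀ k, Measurable fun τ => coeffMul (c · (t - τ)) (b · (t - τ)) (k + 2) := fun k =>
    (measurable_coeffMul (fun j hj _ => hc j hj) (fun j hj _ => hb j hj)).comp
      (measurable_const.sub measurable_id)
  calc ∑ k ∈ Finset.range (N + 1), a (k + 1) t
      = ν (Ioi t) + ∫⁻ τ in Icc 0 t,
          ∑ k ∈ Finset.range N, coeffMul (c · (t - τ)) (b · (t - τ)) (k + 2) ∂ν := by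
        rw [Finset.sum_range_succ', add_comm, ha.one t ht,
          lintegral_finsetSum _ fun k _ => hmeas k]
        exact congrArg _ (Finset.sum_congr rfl fun k _ => ha.step (k + 2) (by omega) t ht)
    _ ≤ ν (Ioi t) + ∫⁻ _ in Icc 0 t, 1 ∂ν := by
        gcongr ν (Ioi t) + ?_
        refine setLIntegral_mono' measurableSet_Icc fun τ hτ => ?_
        obtain ⟨hcN, hbN⟩ := hN (t - τ) (sub_nonneg.2 hτ.2)
        exact (ENNReal.sum_range_coeffMul_add_two_le _ _ N).trans (mul_le_one' hcN hbN)
    _ = 1 := by rw [setLIntegral_one, measure_Ioi_add_measure_Icc ν hν]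

lemma tsum_eq_measure_Ioi_add_setLIntegral (ha : IsDivisionRecursion ν a c b)
    (hc : ∀ k, 1 ≤ k → Measurable (c k)) (hb : ∀ k, 1 ≤ k → Measurable (b k))
    {t : ℝ} (ht : 0 ≤ t) :
    ∑' k, a (k + 1) t = ν (Ioi t) +
      ∫⁻ τ in Icc 0 t, (∑' k, c (k + 1) (t - τ)) * ∑' k, b (k + 1) (t - τ) ∂ν := by
  have hmeas : ∀ k, Measurable fun τ => coeffMul (c · (t - τ)) (b · (t - τ)) (k + 2) := fun k =>
    (measurable_coeffMul (fun j hj _ => hc j hj) (fun j hj _ => hb j hj)).comp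
      (measurable_const.sub measurable_id)
  rw [tsum_eq_zero_add' ENNReal.summable, ha.one t ht]
  congr 1
  calc ∑' k, a (k + 2) t
      = ∑' k, ∫⁻ τ in Icc 0 t, coeffMul (c · (t - τ)) (b · (t - τ)) (k + 2) ∂ν :=
        tsum_congr fun k => ha.step (k + 2) (by omega) t ht
    _ = ∫⁻ τ in Icc 0 t, ∑' k, coeffMul (c · (t - τ)) (b · (t - τ)) (k + 2) ∂ν :=
        (lintegral_tsum fun k => (hmeas k).aemeasurable).symm
    _ = _ := by simp_rw [ENNReal.tsum_coeffMul_add_two]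

lemma one_sub_tsum_le_setLIntegral [IsProbabilityMeasure ν] (hν : ν (Iic 0) = 0)
    (ha : IsDivisionRecursion ν a c b)
    (hc : ∀ k, 1 ≤ k → Measurable (c k)) (hb : ∀ k, 1 ≤ k → Measurable (b k))
    {t : ℝ} (ht : 0 ≤ t) :
    1 - ∑' k, a (k + 1) t ≤
      ∫⁻ τ in Icc 0 t, 1 - (∑' k, c (k + 1) (t - τ)) * ∑' k, b (k + 1) (t - τ) ∂ν := by
  set CB : ℝ → ℝ≥0∞ := fun τ => (∑' k, c (k + 1) (t - τ)) * ∑' k, b (k + 1) (t - τ)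
  have hCB : Measurable CB := by
    have hsub : Measurable fun τ : ℝ => t - τ := measurable_const.sub measurable_id
    exact (Measurable.tsum fun k => (hc (k + 1) (by omega)).comp hsub).mul
      (Measurable.tsum fun k => (hb (k + 1) (by omega)).comp hsub)
  rw [tsub_le_iff_left]
  calc 1 = ν (Ioi t) + ∫⁻ _ in Icc 0 t, 1 ∂ν := by
        rw [setLIntegral_one, measure_Ioi_add_measure_Icc ν hν]
    _ ≤ ν (Ioi t) + ∫⁻ τ in Icc 0 t, CB τ + (1 - CB τ) ∂ν := by
        gcongr with τ
        exact le_add_tsub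
    _ = ∑' k, a (k + 1) t + ∫⁻ τ in Icc 0 t, 1 - CB τ ∂ν := by
        rw [lintegral_add_left hCB, ← add_assoc,
          ha.tsum_eq_measure_Ioi_add_setLIntegral hc hb ht]

lemma comp_max_zero (ha : IsDivisionRecursion ν a c b) :
    IsDivisionRecursion ν (fun k x => a k (max x 0)) (fun k x => c k (max x 0))
      (fun k x => b k (max x 0)) where
  one t ht := by simp only [max_eq_left ht, ha.one t ht]
  step k hk t ht := by
    simp only [max_eq_left ht, ha.step k hk t ht]
    exact setLIntegral_congr_fun measurableSet_Icc fun τ hτ => by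
      simp only [max_eq_left (sub_nonneg.2 hτ.2)]

lemma measurable_comp_max_zero_of_two_le [SFinite ν] (ha : IsDivisionRecursion ν a c b)
    {k : ℕ} (hk : 2 ≤ k) (hc : ∀ j, 1 ≤ j → j < k → Measurable fun x => c j (max x 0))
    (hb : ∀ j, 1 ≤ j → j < k → Measurable fun x => b j (max x 0)) :
    Measurable fun x => a k (max x 0) := by
  convert (measurable_setLIntegral_Icc_sub ν (measurable_coeffMul hc hb)).comp
    (measurable_id.max measurable_const) using 1
  funext x
  have hrec := ha.comp_max_zero.step k hk (max x 0) (le_max_right x 0)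
  simp only [max_eq_left (le_max_right x 0)] at hrec
  exact hrec

end IsDivisionRecursion

lemma measurable_comp_max_zero {P Q : Measure ℝ} [SFinite P] [SFinite Q]
    {c b : ℕ → ℝ → ℝ≥0∞} (hc : IsDivisionRecursion P c c b) (hb : IsDivisionRecursion Q b c b) :
    ∀ k, 1 ≤ k → Measurable (fun x => c k (max x 0)) ∧ Measurable (fun x => b k (max x 0)) := by
  intro k
  induction k using Nat.strong_induction_on with
  | _ k ih =>
    intro hk
    have hIoi : ∀ ν : Measure ℝ, Measurable fun x : ℝ => ν (Ioi (max x 0)) := fun ν =>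
      Antitone.measurable fun x y hxy => measure_mono (Ioi_subset_Ioi (max_le_max_right 0 hxy))
    rcases hk.eq_or_lt with rfl | hk2
    · constructor
      · convert hIoi P using 2 with x
        exact hc.one _ (le_max_right x 0)
      · convert hIoi Q using 2 with x
        exact hb.one _ (le_max_right x 0)
    · have hc' : ∀ j, 1 ≤ j → j < k → Measurable fun x => c j (max x 0) :=
        fun j hj hjk => (ih j hjk hj).1
      have hb' : ∀ j, 1 ≤ j → j < k → Measurable fun x => b j (max x 0) :=
        fun j hj hjk => (ih j hjk hj).2
      exact ⟨hc.measurable_comp_max_zero_of_two_le hk2 hc' hb',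
        hb.measurable_comp_max_zero_of_two_le hk2 hc' hb'⟩

theorem tsum_eq_one_of_measurable {P Q : Measure ℝ} [IsProbabilityMeasure P]
    [IsProbabilityMeasure Q] (hP : P (Iic 0) = 0) (hQ : Q (Iic 0) = 0) {c b : ℕ → ℝ → ℝ≥0∞}
    (hc : IsDivisionRecursion P c c b) (hb : IsDivisionRecursion Q b c b)
    (hcm : ∀ k, 1 ≤ k → Measurable (c k)) (hbm : ∀ k, 1 ≤ k → Measurable (b k))
    {t : ℝ} (ht : 0 ≤ t) : ∑' k, c (k + 1) t = 1 ∧ ∑' k, b (k + 1) t = 1 := by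
  have hpartial : ∀ N y, 0 ≤ y →
      ∑ k ∈ Finset.range N, c (k + 1) y ≤ 1 ∧ ∑ k ∈ Finset.range N, b (k + 1) y ≤ 1 := by
    intro N
    induction N with
    | zero => simp
    | succ N ih => exact fun y hy => ⟨hc.sum_range_succ_le_one hP hcm hbm ih hy,
        hb.sum_range_succ_le_one hQ hcm hbm ih hy⟩
  have hC : ∀ y, 0 ≤ y → ∑' k, c (k + 1) y ≤ 1 := fun y hy =>
    ENNReal.tsum_le_of_sum_range_le fun N => (hpartial N y hy).1
  have hB : ∀ y, 0 ≤ y → ∑' k, b (k + 1) y ≤ 1 := fun y hy =>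
    ENNReal.tsum_le_of_sum_range_le fun N => (hpartial N y hy).2
  set w : ℝ → ℝ≥0∞ := fun y => (1 - ∑' k, c (k + 1) y) + (1 - ∑' k, b (k + 1) y)
  have hdefect : ∀ y, 0 ≤ y → w y ≤ ∫⁻ τ in Icc 0 y, w (y - τ) ∂(P + Q) := by
    intro y hy
    have hmono : ∀ ν : Measure ℝ, ∫⁻ τ in Icc 0 y,
        1 - (∑' k, c (k + 1) (y - τ)) * ∑' k, b (k + 1) (y - τ) ∂ν
          ≤ ∫⁻ τ in Icc 0 y, w (y - τ) ∂ν := fun ν =>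
      setLIntegral_mono' measurableSet_Icc fun τ hτ =>
        ENNReal.one_sub_mul_le (hC _ (sub_nonneg.2 hτ.2)) _
    rw [Measure.restrict_add, lintegral_add_measure]
    exact add_le_add ((hc.one_sub_tsum_le_setLIntegral hP hcm hbm hy).trans (hmono P))
      ((hb.one_sub_tsum_le_setLIntegral hQ hcm hbm hy).trans (hmono Q))
  have hatom : (P + Q) {0} = 0 := by
    simp [measure_mono_null (singleton_subset_iff.2 self_mem_Iic) hP,
      measure_mono_null (singleton_subset_iff.2 self_mem_Iic) hQ]
  have hw2 : ∀ y, 0 ≤ y → w y ≤ 2 := fun y _ =>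
    (add_le_add tsub_le_self tsub_le_self).trans_eq one_add_one_eq_two
  obtain ⟨hc0, hb0⟩ := add_eq_zero.1
    (eq_zero_of_le_setLIntegral_Icc_sub hatom ENNReal.ofNat_ne_top hw2 hdefect ht)
  exact ⟨le_antisymm (hC t ht) (tsub_eq_zero_iff_le.1 hc0),
    le_antisymm (hB t ht) (tsub_eq_zero_iff_le.1 hb0)⟩

/-- Define `c_k, b_k : [0,∞) → [0,∞)` recursively by
`c_1(t) = P((t,∞))`, `b_1(t) = Q((t,∞))`, and for `k ≥ 2`,
`c_k(t) = ∫_{[0,t]} Σ_{j=1}^{k-1} c_j(t-τ) b_{k-j}(t-τ) dP(τ)`,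
`b_k(t) = ∫_{[0,t]} Σ_{j=1}^{k-1} c_j(t-τ) b_{k-j}(t-τ) dQ(τ)`.
Then for every `t ≥ 0`, `Σ_{k=1}^∞ c_k(t) = 1` and `Σ_{k=1}^∞ b_k(t) = 1`
(so these are the coefficient sequences of probability generating functions). -/
theorem stmt9
    (P Q : Measure ℝ) [IsProbabilityMeasure P] [IsProbabilityMeasure Q]
    (hP : P (Set.Iic 0) = 0) (hQ : Q (Set.Iic 0) = 0)
    (c b : ℕ → ℝ → ℝ≥0∞)
    (hc1 : ∀ t ≥ (0:ℝ), c 1 t = P (Set.Ioi t))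
    (hb1 : ∀ t ≥ (0:ℝ), b 1 t = Q (Set.Ioi t))
    (hck : ∀ k : ℕ, 2 ≤ k → ∀ t ≥ (0:ℝ), c k t =
      ∫⁻ τ in Set.Icc 0 t, (∑ j ∈ Finset.Ico 1 k, c j (t - τ) * b (k - j) (t - τ)) ∂P)
    (hbk : ∀ k : ℕ, 2 ≤ k → ∀ t ≥ (0:ℝ), b k t =
      ∫⁻ τ in Set.Icc 0 t, (∑ j ∈ Finset.Ico 1 k, c j (t - τ) * b (k - j) (t - τ)) ∂Q) :
    ∀ t ≥ (0:ℝ), (∑' k : ℕ, c (k + 1) t) = 1 ∧ (∑' k : ℕ, b (k + 1) t) = 1 := by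
  intro t ht
  have hc : IsDivisionRecursion P c c b := ⟨hc1, hck⟩
  have hb : IsDivisionRecursion Q b c b := ⟨hb1, hbk⟩
  -- Only `t ≥ 0` is constrained; clamping the time makes every `c k`, `b k` measurable on `ℝ`.
  have hmeas := measurable_comp_max_zero hc hb
  simpa only [max_eq_left ht] using tsum_eq_one_of_measurable hP hQ hc.comp_max_zero
    hb.comp_max_zero (fun k hk => (hmeas k hk).1) (fun k hk => (hmeas k hk).2) ht
end

section
/- Suppose c_k, b_k : [0,∞) → [0,∞) are measurable functions with Σ_{k=1}^∞ c_k(t) ≤ 1 and Σ_{k=1}^∞ b_k(t) ≤ 1 for all t ≥ 0, and suppose that the functions f(t,x) = Σ_{k=1}^∞ c_k(t) x^k and g(t,x) = Σ_{k=1}^∞ b_k(t) x^k satisfy, for all t ≥ 0 and all x ∈ (0,1), the integral equations f(t,x) = x·P((t,∞)) + ∫_{[0,t]} f(t-τ,x) g(t-τ,x) dP(τ) and g(t,x) = x·Q((t,∞)) + ∫_{[0,t]} f(t-τ,x) g(t-τ,x) dQ(τ). Then c_1(t) = P((t,∞)), b_1(t) = Q((t,∞)), and for every k ≥ 2 and t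 ≥ 0: c_k(t) = ∫_{[0,t]} Σ_{j=1}^{k-1} c_j(t-τ) b_{k-j}(t-τ) dP(τ) and b_k(t) = ∫_{[0,t]} Σ_{j=1}^{k-1} c_j(t-τ) b_{k-j}(t-τ) dQ(τ). -/
/-!
For fixed `t`, both integral equations are identities between power series in `x` whose
coefficients are bounded. Expanding `f g` as a Cauchy product and integrating term by term
(the terms are dominated by a geometric series) turns the right-hand side into the power series
with coefficient `P((t,∞)) + ∫ Σ_{0<j<k} c_j b_{k-j} dP` at `x ^ k`, the first summand present only
for `k = 1`. Two power series with bounded coefficients that agree on `(0,1)` are analytic on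
the unit disc, hence agree near `0` by the identity theorem, so their coefficients coincide.
-/

open MeasureTheory Set Filter

open Topology Finset FormalMultilinearSeries

theorem hasFPowerSeriesAt_ofScalarsSum_of_norm_le {𝕜 : Type*} [NontriviallyNormedField 𝕜]
    [CompleteSpace 𝕜] {a : ℕ → 𝕜} {C : ℝ} (ha : ∀ k, ‖a k‖ ≤ C) :
    HasFPowerSeriesAt (ofScalarsSum a) (ofScalars 𝕜 a) 0 := by
  have hr : 1 ≤ (ofScalars 𝕜 a).radius :=
    mod_cast (ofScalars 𝕜 a).le_radius_of_bound C fun n => by simpa [ofScalars_norm] using ha n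
  exact ((ofScalars 𝕜 a).hasFPowerSeriesOnBall (zero_lt_one.trans_le hr)).hasFPowerSeriesAt

theorem eq_of_frequently_tsum_mul_pow_eq {𝕜 : Type*} [NontriviallyNormedField 𝕜]
    [CompleteSpace 𝕜] {a b : ℕ → 𝕜} {Ca Cb : ℝ} (ha : ∀ k, ‖a k‖ ≤ Ca) (hb : ∀ k, ‖b k‖ ≤ Cb)
    (h : ∃ᶠ x in 𝓝[≠] 0, ∑' k, a k * x ^ k = ∑' k, b k * x ^ k) : a = b := by
  have hpa := hasFPowerSeriesAt_ofScalarsSum_of_norm_le ha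
  have hpb := hasFPowerSeriesAt_ofScalarsSum_of_norm_le hb
  simp only [← smul_eq_mul, ← ofScalars_sum_eq] at h
  exact ofScalars_series_injective 𝕜 𝕜 <| hpa.eq_formalMultilinearSeries_of_eventually hpb <|
    (hpa.analyticAt.frequently_eq_iff_eventually_eq hpb.analyticAt).mp h

theorem eq_of_tsum_mul_pow_succ_eq_on_Ioo {a b : ℕ → ℝ} {Ca Cb : ℝ} (ha : ∀ k, |a k| ≤ Ca)
    (hb : ∀ k, |b k| ≤ Cb)
    (h : ∀ x ∈ Ioo (0 : ℝ) 1, ∑' k, a k * x ^ (k + 1) = ∑' k, b k * x ^ (k + 1)) : a = b := by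
  refine eq_of_frequently_tsum_mul_pow_eq ha hb (Frequently.filter_mono ?_ (nhdsGT_le_nhdsNE 0))
  refine (Eventually.frequently (Ioo_mem_nhdsGT one_pos)).mono fun x hx => ?_
  simpa only [pow_succ, ← mul_assoc, tsum_mul_right, mul_left_inj' hx.1.ne'] using h x hx

theorem summable_norm_mul_pow_succ_of_abs_le {a : ℕ → ℝ} {C x : ℝ}
    (ha : ∀ k, |a (k + 1)| ≤ C) (hx : |x| < 1) : Summable fun k => ‖a (k + 1) * x ^ (k + 1)‖ := by
  refine ((summable_geometric_of_lt_one (abs_nonneg x) hx).mul_left (C * |x|)).of_nonneg_of_le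
    (fun _ => norm_nonneg _) fun k => ?_
  rw [Real.norm_eq_abs, abs_mul, abs_pow, pow_succ, mul_comm (|x| ^ k), ← mul_assoc]
  exact mul_le_mul_of_nonneg_right (mul_le_mul_of_nonneg_right (ha k) (abs_nonneg x))
    (by positivity)

theorem integral_tsum_mul_of_norm_le {α : Type*} [MeasurableSpace α] {μ : Measure α}
    [IsFiniteMeasure μ] {F : ℕ → α → ℝ} {r : ℕ → ℝ} {C : ℝ}
    (hFm : ∀ k, AEStronglyMeasurable (F k) μ) (hFC : ∀ k, ∀ᵐ a ∂μ, ‖F k a‖ ≤ C)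
    (hr : Summable fun k => ‖r k‖) :
    ∫ a, ∑' k, F k a * r k ∂μ = ∑' k, (∫ a, F k a ∂μ) * r k := by
  have hint : ∀ k, Integrable (F k) μ := fun k => .of_bound (hFm k) C (hFC k)
  rw [← integral_tsum_of_summable_integral_norm (fun k => (hint k).mul_const (r k))]
  · simp_rw [integral_mul_const]
  · refine (hr.mul_left (C * μ.real univ)).of_nonneg_of_le
      (fun k => integral_nonneg fun _ => norm_nonneg _) fun k => ?_
    simp_rw [norm_mul, integral_mul_const]
    gcongr
    refine (le_abs_self _).trans ?_
    simpa using norm_integral_le_of_norm_le_const (f := fun a => ‖F k a‖) (by simpa using hFC k)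

/-- The coefficient of `x ^ k` in `(∑_{j ≥ 1} u j x ^ j) * (∑_{j ≥ 1} v j x ^ j)`; the values
`u 0` and `v 0` do not enter. -/
def cauchyCoeff (u v : ℕ → ℝ) (k : ℕ) : ℝ :=
  ∑ j ∈ Ico 1 k, u j * v (k - j)

section CauchyCoeff

variable {u v : ℕ → ℝ}

theorem cauchyCoeff_add_two (u v : ℕ → ℝ) (n : ℕ) :
    cauchyCoeff u v (n + 2) = ∑ ij ∈ antidiagonal n, u (ij.1 + 1) * v (ij.2 + 1) := by
  rw [cauchyCoeff, Nat.sum_antidiagonal_eq_sum_range_succ_mk, sum_Ico_eq_sum_range]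
  refine sum_congr (by simp) fun j hj => ?_
  have hjn : j ≤ n := Nat.lt_succ_iff.mp (mem_range.mp hj)
  rw [add_comm 1 j, show n + 2 - (j + 1) = n - j + 1 by omega]

theorem cauchyCoeff_of_le_one {k : ℕ} (hk : k ≤ 1) : cauchyCoeff u v k = 0 := by
  simp [cauchyCoeff, Finset.Ico_eq_empty_of_le hk]

theorem tsum_mul_pow_succ_mul_tsum_mul_pow_succ {Cu Cv x : ℝ}
    (hu : ∀ k, |u (k + 1)| ≤ Cu) (hv : ∀ k, |v (k + 1)| ≤ Cv) (hx : |x| < 1) :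
    (∑' k, u (k + 1) * x ^ (k + 1)) * (∑' k, v (k + 1) * x ^ (k + 1)) =
      ∑' k, cauchyCoeff u v k * x ^ k := by
  rw [tsum_mul_tsum_eq_tsum_sum_antidiagonal_of_summable_norm
    (summable_norm_mul_pow_succ_of_abs_le hu hx) (summable_norm_mul_pow_succ_of_abs_le hv hx),
    ← (add_left_injective 2).tsum_eq (f := fun k => cauchyCoeff u v k * x ^ k)]
  · refine tsum_congr fun n => ?_
    rw [cauchyCoeff_add_two, sum_mul]
    refine sum_congr rfl fun ij hij => ?_
    rw [← HasAntidiagonal.mem_antidiagonal.mp hij]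
    ring
  · intro k hk
    exact ⟨k - 2, Nat.sub_add_cancel (not_lt.mp fun hk2 => hk (by
      simp [cauchyCoeff_of_le_one (Nat.lt_succ_iff.mp hk2)]))⟩

theorem abs_le_one_of_sum_range_le_one (hu : ∀ k, 0 ≤ u k)
    (hsum : ∀ N, ∑ k ∈ range N, u (k + 1) ≤ 1) (k : ℕ) : |u (k + 1)| ≤ 1 := by
  rw [abs_of_nonneg (hu _)]
  exact (single_le_sum (fun j _ => hu (j + 1)) (self_mem_range_succ k)).trans (hsum (k + 1))

theorem abs_cauchyCoeff_le_one (hu : ∀ k, 0 ≤ u k) (hv : ∀ k, 0 ≤ v k)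
    (hsum : ∀ N, ∑ k ∈ range N, u (k + 1) ≤ 1) (hv1 : ∀ k, |v (k + 1)| ≤ 1) (k : ℕ) :
    |cauchyCoeff u v k| ≤ 1 := by
  have hnonneg : 0 ≤ cauchyCoeff u v k := sum_nonneg fun j _ => mul_nonneg (hu j) (hv _)
  rw [abs_of_nonneg hnonneg]
  calc cauchyCoeff u v k ≤ ∑ j ∈ Ico 1 k, u j := sum_le_sum fun j hj => by
        have hjk : k - j = k - j - 1 + 1 := by have := (mem_Ico.mp hj).2; omega
        exact mul_le_of_le_one_right (hu j) (le_of_abs_le (hjk ▸ hv1 _))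
    _ = ∑ i ∈ range (k - 1), u (i + 1) := by
        rw [sum_Ico_eq_sum_range]; simp only [add_comm 1]
    _ ≤ 1 := hsum _

end CauchyCoeff

theorem coeff_eq_of_tsum_eq_add_integral {c b : ℕ → ℝ → ℝ} (hcm : ∀ k, Measurable (c k))
    (hbm : ∀ k, Measurable (b k)) (hcnn : ∀ k t, 0 ≤ c k t) (hbnn : ∀ k t, 0 ≤ b k t)
    (hcsum : ∀ t ≥ (0:ℝ), ∀ N : ℕ, ∑ k ∈ range N, c (k + 1) t ≤ 1)
    (hbsum : ∀ t ≥ (0:ℝ), ∀ N : ℕ, ∑ k ∈ range N, b (k + 1) t ≤ 1)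
    (μ : Measure ℝ) [IsFiniteMeasure μ] {d : ℕ → ℝ} {D : ℝ}
    (hd : ∀ k, |d (k + 1)| ≤ D) (t m : ℝ)
    (h : ∀ x ∈ Ioo (0 : ℝ) 1, ∑' k, d (k + 1) * x ^ (k + 1) = x * m +
      ∫ τ in Icc 0 t, (∑' k, c (k + 1) (t - τ) * x ^ (k + 1)) *
        (∑' k, b (k + 1) (t - τ) * x ^ (k + 1)) ∂μ) :
    d 1 = m ∧ ∀ k, 2 ≤ k →
      d k = ∫ τ in Icc 0 t, cauchyCoeff (c · (t - τ)) (b · (t - τ)) k ∂μ := by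
  set F : ℕ → ℝ → ℝ := fun k τ => cauchyCoeff (c · (t - τ)) (b · (t - τ)) k
  set I : ℕ → ℝ := fun k => ∫ τ in Icc 0 t, F k τ ∂μ
  have hcoeff : ∀ τ ∈ Icc 0 t, ∀ k,
      |c (k + 1) (t - τ)| ≤ 1 ∧ |b (k + 1) (t - τ)| ≤ 1 ∧ |F k τ| ≤ 1 := by
    intro τ hτ k
    have hs : 0 ≤ t - τ := sub_nonneg.mpr hτ.2
    have hb1 := abs_le_one_of_sum_range_le_one (hbnn · _) (hbsum _ hs)
    exact ⟨abs_le_one_of_sum_range_le_one (hcnn · _) (hcsum _ hs) k, hb1 k,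
      abs_cauchyCoeff_le_one (hcnn · _) (hbnn · _) (hcsum _ hs) hb1 k⟩
  have hFm : ∀ k, Measurable (F k) := fun k => Finset.measurable_sum _ fun j _ => by fun_prop
  have hI : ∀ k, |I k| ≤ μ.real (Icc 0 t) := fun k => by
    simpa using norm_integral_le_of_norm_le_const (f := F k) (C := 1)
      (ae_restrict_of_forall_mem measurableSet_Icc fun τ hτ => (hcoeff τ hτ k).2.2)
  have hI0 : ∀ k ≤ 1, I k = 0 := fun k hk => by simp [I, F, cauchyCoeff_of_le_one hk]
  set ρ : ℕ → ℝ := fun k => I (k + 1) + if k = 0 then m else 0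
  have hρ : ∀ k, |ρ k| ≤ μ.real (Icc 0 t) + |m| := fun k =>
    (abs_add_le _ _).trans (add_le_add (hI _) (by split_ifs <;> simp))
  have hseries : ∀ x ∈ Ioo (0 : ℝ) 1,
      ∑' k, d (k + 1) * x ^ (k + 1) = ∑' k, ρ k * x ^ (k + 1) := by
    intro x hx
    have hx1 : |x| < 1 := by rw [abs_of_pos hx.1]; exact hx.2
    calc ∑' k, d (k + 1) * x ^ (k + 1)
        = x * m + ∫ τ in Icc 0 t, ∑' k, F k τ * x ^ k ∂μ := by
          rw [h x hx]
          congr 1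
          exact setIntegral_congr_fun measurableSet_Icc fun τ hτ =>
            tsum_mul_pow_succ_mul_tsum_mul_pow_succ (u := (c · (t - τ))) (v := (b · (t - τ)))
              (hcoeff τ hτ · |>.1) (hcoeff τ hτ · |>.2.1) hx1
      _ = x * m + ∑' k, I k * x ^ k := by
          rw [integral_tsum_mul_of_norm_le (fun k => (hFm k).aestronglyMeasurable)
            (fun k => ae_restrict_of_forall_mem measurableSet_Icc fun τ hτ => (hcoeff τ hτ k).2.2)
            (summable_norm_geometric_of_norm_lt_one hx1)]
      _ = x * m + ∑' k, I (k + 1) * x ^ (k + 1) := by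
          rw [(add_left_injective 1).tsum_eq (f := fun k => I k * x ^ k)]
          intro k hk
          exact ⟨k - 1, Nat.sub_add_cancel
            (Nat.one_le_iff_ne_zero.mpr fun h0 => hk (by simp [h0, hI0]))⟩
      _ = ∑' k, ρ k * x ^ (k + 1) := by
          have hsI := (summable_norm_mul_pow_succ_of_abs_le (a := I) (fun k => hI _) hx1).of_norm
          have hsm : Summable fun k : ℕ => (if k = 0 then m else 0) * x ^ (k + 1) :=
            summable_of_ne_finset_zero (s := {0}) fun k hk => by simp_all
          simp only [ρ, add_mul]
          rw [hsI.tsum_add hsm, add_comm,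
            tsum_eq_single (f := fun k : ℕ => (if k = 0 then m else 0) * x ^ (k + 1)) 0
              fun k hk => by simp [hk]]
          simp [mul_comm]
  have hdρ := congrFun (eq_of_tsum_mul_pow_succ_eq_on_Ioo hd hρ hseries)
  refine ⟨by simpa [ρ, hI0] using hdρ 0, fun k hk => ?_⟩
  obtain ⟨n, rfl⟩ : ∃ n, k = n + 2 := ⟨k - 2, by omega⟩
  simpa [ρ] using hdρ (n + 1)

theorem stmt10_general
    (P Q : Measure ℝ) [IsProbabilityMeasure P] [IsProbabilityMeasure Q]
    (c b : ℕ → ℝ → ℝ)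
    (hcm : ∀ k, Measurable (c k)) (hbm : ∀ k, Measurable (b k))
    (hcnn : ∀ k t, 0 ≤ c k t) (hbnn : ∀ k t, 0 ≤ b k t)
    (hcsum : ∀ t ≥ (0:ℝ), ∀ N : ℕ, ∑ k ∈ Finset.range N, c (k + 1) t ≤ 1)
    (hbsum : ∀ t ≥ (0:ℝ), ∀ N : ℕ, ∑ k ∈ Finset.range N, b (k + 1) t ≤ 1)
    (f g : ℝ → ℝ → ℝ)
    (hf : ∀ t x : ℝ, f t x = ∑' k : ℕ, c (k + 1) t * x ^ (k + 1))
    (hg : ∀ t x : ℝ, g t x = ∑' k : ℕ, b (k + 1) t * x ^ (k + 1))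
    (heqf : ∀ t ≥ (0:ℝ), ∀ x ∈ Set.Ioo (0:ℝ) 1,
      f t x = x * (P (Set.Ioi t)).toReal +
        ∫ τ in Set.Icc 0 t, f (t - τ) x * g (t - τ) x ∂P)
    (heqg : ∀ t ≥ (0:ℝ), ∀ x ∈ Set.Ioo (0:ℝ) 1,
      g t x = x * (Q (Set.Ioi t)).toReal +
        ∫ τ in Set.Icc 0 t, f (t - τ) x * g (t - τ) x ∂Q) :
    ∀ t ≥ (0:ℝ),
      c 1 t = (P (Set.Ioi t)).toReal ∧
      b 1 t = (Q (Set.Ioi t)).toReal ∧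
      (∀ k : ℕ, 2 ≤ k →
        c k t = ∫ τ in Set.Icc 0 t,
          (∑ j ∈ Finset.Ico 1 k, c j (t - τ) * b (k - j) (t - τ)) ∂P ∧
        b k t = ∫ τ in Set.Icc 0 t,
          (∑ j ∈ Finset.Ico 1 k, c j (t - τ) * b (k - j) (t - τ)) ∂Q) := by
  intro t ht
  obtain ⟨hc1, hc⟩ := coeff_eq_of_tsum_eq_add_integral hcm hbm hcnn hbnn hcsum hbsum P
    (abs_le_one_of_sum_range_le_one (hcnn · t) (hcsum t ht)) t _
    fun x hx => by simpa only [hf, hg] using heqf t ht x hx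
  obtain ⟨hb1, hb⟩ := coeff_eq_of_tsum_eq_add_integral hcm hbm hcnn hbnn hcsum hbsum Q
    (abs_le_one_of_sum_range_le_one (hbnn · t) (hbsum t ht)) t _
    fun x hx => by simpa only [hf, hg] using heqg t ht x hx
  exact ⟨hc1, hb1, fun k hk => ⟨hc k hk, hb k hk⟩⟩

/-- Suppose `c_k, b_k : [0,∞) → [0,∞)` are measurable with
`Σ_{k≥1} c_k(t) ≤ 1` and `Σ_{k≥1} b_k(t) ≤ 1`, and the generating functions
`f(t,x) = Σ_{k≥1} c_k(t) x^k`, `g(t,x) = Σ_{k≥1} b_k(t) x^k` satisfy, for all `t ≥ 0` and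
`x ∈ (0,1)`,
`f(t,x) = x P((t,∞)) + ∫_{[0,t]} f(t-τ,x) g(t-τ,x) dP(τ)` and
`g(t,x) = x Q((t,∞)) + ∫_{[0,t]} f(t-τ,x) g(t-τ,x) dQ(τ)`.
Then `c_1(t) = P((t,∞))`, `b_1(t) = Q((t,∞))`, and for `k ≥ 2`,
`c_k(t) = ∫_{[0,t]} Σ_{j=1}^{k-1} c_j(t-τ) b_{k-j}(t-τ) dP(τ)` and
`b_k(t) = ∫_{[0,t]} Σ_{j=1}^{k-1} c_j(t-τ) b_{k-j}(t-τ) dQ(τ)`. -/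
theorem stmt10
    (P Q : Measure ℝ) [IsProbabilityMeasure P] [IsProbabilityMeasure Q]
    (hP : P (Set.Iic 0) = 0) (hQ : Q (Set.Iic 0) = 0)
    (c b : ℕ → ℝ → ℝ)
    (hcm : ∀ k, Measurable (c k)) (hbm : ∀ k, Measurable (b k))
    (hcnn : ∀ k t, 0 ≤ c k t) (hbnn : ∀ k t, 0 ≤ b k t)
    (hcsum : ∀ t ≥ (0:ℝ), ∀ N : ℕ, ∑ k ∈ Finset.range N, c (k + 1) t ≤ 1)
    (hbsum : ∀ t ≥ (0:ℝ), ∀ N : ℕ, ∑ k ∈ Finset.range N, b (k + 1) t ≤ 1)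
    (f g : ℝ → ℝ → ℝ)
    (hf : ∀ t x : ℝ, f t x = ∑' k : ℕ, c (k + 1) t * x ^ (k + 1))
    (hg : ∀ t x : ℝ, g t x = ∑' k : ℕ, b (k + 1) t * x ^ (k + 1))
    (heqf : ∀ t ≥ (0:ℝ), ∀ x ∈ Set.Ioo (0:ℝ) 1,
      f t x = x * (P (Set.Ioi t)).toReal +
        ∫ τ in Set.Icc 0 t, f (t - τ) x * g (t - τ) x ∂P)
    (heqg : ∀ t ≥ (0:ℝ), ∀ x ∈ Set.Ioo (0:ℝ) 1,
      g t x = x * (Q (Set.Ioi t)).toReal +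
        ∫ τ in Set.Icc 0 t, f (t - τ) x * g (t - τ) x ∂Q) :
    ∀ t ≥ (0:ℝ),
      c 1 t = (P (Set.Ioi t)).toReal ∧
      b 1 t = (Q (Set.Ioi t)).toReal ∧
      (∀ k : ℕ, 2 ≤ k →
        c k t = ∫ τ in Set.Icc 0 t,
          (∑ j ∈ Finset.Ico 1 k, c j (t - τ) * b (k - j) (t - τ)) ∂P ∧
        b k t = ∫ τ in Set.Icc 0 t,
          (∑ j ∈ Finset.Ico 1 k, c j (t - τ) * b (k - j) (t - τ)) ∂Q) :=
  stmt10_general P Q c b hcm hbm hcnn hbnn hcsum hbsum f g hf hg heqf heqg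
end

section
/- Fix x ∈ ℂ with |x| < 1. The function f(t) = x e^{-t}/(1 - x + x e^{-t}) is well defined for all t ≥ 0 (its denominator never vanishes), satisfies f(0) = x and the differential equation f'(t) = f(t)² - f(t) for all t ≥ 0, and also satisfies the integral equation f(t) = x e^{-t} + ∫₀^t f(t-τ)² e^{-τ} dτ for all t ≥ 0. -/
/-!
Writing the denominator as `1 - x (1 - e^{-t})` with `0 ≤ 1 - e^{-t} < 1` shows it cannot vanish
when `‖x‖ < 1`. With `u(t) = x e^{-t}` we have `u' = -u`, and any quotient `u / (c + u)` with
`u' = -u` solves the logistic equation `f' = f² - f`. Multiplying `f' = f² - f` by the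
integrating factor `e^t` gives `(e^t f)' = e^t f²`; integrating over `[0, t]` and reflecting
`τ ↦ t - τ` yields the integral equation.
-/
open MeasureTheory Set Filter intervalIntegral

theorem one_sub_mul_ofReal_ne_zero {x : ℂ} (hx : ‖x‖ < 1) {s : ℝ} (hs : |s| ≤ 1) :
    1 - x * s ≠ 0 := by
  intro h
  have hnorm := congrArg norm (sub_eq_zero.mp h)
  rw [norm_one, norm_mul, Complex.norm_real, Real.norm_eq_abs] at hnorm
  nlinarith [norm_nonneg x, abs_nonneg s]

theorem one_sub_add_mul_cexp_neg_ne_zero {x : ℂ} (hx : ‖x‖ < 1) {t : ℝ} (ht : 0 ≤ t) :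
    1 - x + x * Complex.exp (-(t : ℂ)) ≠ 0 := by
  have hexp_pos := Real.exp_pos (-t)
  have hexp_le : Real.exp (-t) ≤ 1 := Real.exp_le_one_iff.mpr (by linarith)
  convert one_sub_mul_ofReal_ne_zero hx (s := 1 - Real.exp (-t))
    (abs_le.mpr ⟨by linarith, by linarith⟩) using 1
  push_cast
  ring

theorem hasDerivAt_cexp_neg_ofReal (t : ℝ) :
    HasDerivAt (fun s : ℝ => Complex.exp (-(s : ℂ))) (-Complex.exp (-(t : ℂ))) t := by
  simpa using ((hasDerivAt_id t).ofReal_comp.neg).cexp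

theorem HasDerivAt.div_const_add_of_eq_neg {u : ℝ → ℂ} {c : ℂ} {t : ℝ}
    (hu : HasDerivAt u (-u t) t) (h : c + u t ≠ 0) :
    HasDerivAt (fun s => u s / (c + u s)) ((u t / (c + u t)) ^ 2 - u t / (c + u t)) t := by
  refine (hu.div (hu.const_add c) h).congr_deriv ?_
  field_simp
  ring

theorem eq_mul_cexp_neg_add_integral_of_hasDerivAt {f g : ℝ → ℂ} {t : ℝ}
    (hf : ∀ s ∈ uIcc 0 t, HasDerivAt f (g s - f s) s) (hg : ContinuousOn g (uIcc 0 t)) :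
    f t = f 0 * Complex.exp (-(t : ℂ)) +
      ∫ τ in (0:ℝ)..t, g (t - τ) * Complex.exp (-(τ : ℂ)) := by
  have hexp : ∀ s : ℝ, HasDerivAt (fun s : ℝ => Complex.exp s) (Complex.exp s) s :=
    fun s => (Complex.hasDerivAt_exp s).comp_ofReal
  have hftc : ∫ s in (0:ℝ)..t, Complex.exp s * g s = Complex.exp t * f t - f 0 := by
    rw [integral_eq_sub_of_hasDerivAt (f := fun s : ℝ => Complex.exp s * f s)]
    · simp
    · intro s hs
      exact ((hexp s).mul (hf s hs)).congr_deriv (by ring)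
    · exact ((Complex.continuous_exp.comp Complex.continuous_ofReal).continuousOn.mul
        hg).intervalIntegrable
  have hsubst : ∫ τ in (0:ℝ)..t, g (t - τ) * Complex.exp (-(τ : ℂ)) =
      Complex.exp (-(t : ℂ)) * ∫ s in (0:ℝ)..t, Complex.exp s * g s := by
    have hreflect := integral_comp_sub_left (a := 0) (b := t)
      (fun τ => g (t - τ) * Complex.exp (-(τ : ℂ))) t
    simp only [sub_sub_cancel, sub_self, sub_zero] at hreflect
    rw [← hreflect, ← intervalIntegral.integral_const_mul]
    congr 1 with s
    rw [show -((t - s : ℝ) : ℂ) = -t + s by push_cast; ring, Complex.exp_add]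
    ring
  rw [hsubst, hftc, mul_sub, ← mul_assoc, ← Complex.exp_add, neg_add_cancel, Complex.exp_zero]
  ring

/-- Fix `x ∈ ℂ` with `|x| < 1`. The function
`f(t) = x e^{-t}/(1 - x + x e^{-t})` is well defined for all `t ≥ 0` (its denominator never
vanishes), satisfies `f(0) = x` and the differential equation `f'(t) = f(t)² - f(t)` for all
`t ≥ 0`, and also satisfies the integral equation
`f(t) = x e^{-t} + ∫₀^t f(t-τ)² e^{-τ} dτ` for all `t ≥ 0`. -/
theorem stmt12
    (x : ℂ) (hx : ‖x‖ < 1)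
    (f : ℝ → ℂ)
    (hf : ∀ t : ℝ, f t = x * Complex.exp (-(t : ℂ)) / (1 - x + x * Complex.exp (-(t : ℂ)))) :
    (∀ t ≥ (0:ℝ), 1 - x + x * Complex.exp (-(t : ℂ)) ≠ 0) ∧
    f 0 = x ∧
    (∀ t ≥ (0:ℝ), HasDerivAt f (f t ^ 2 - f t) t) ∧
    (∀ t ≥ (0:ℝ), f t = x * Complex.exp (-(t : ℂ)) +
      ∫ τ in (0:ℝ)..t, f (t - τ) ^ 2 * Complex.exp (-(τ : ℂ))) := by
  have hden : ∀ t ≥ (0:ℝ), 1 - x + x * Complex.exp (-(t : ℂ)) ≠ 0 :=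
    fun t ht => one_sub_add_mul_cexp_neg_ne_zero hx ht
  have hf0 : f 0 = x := by simp [hf]
  have hode : ∀ t ≥ (0:ℝ), HasDerivAt f (f t ^ 2 - f t) t := by
    intro t ht
    have hu := (hasDerivAt_cexp_neg_ofReal t).const_mul x
    rw [mul_neg] at hu
    simpa only [← hf] using hu.div_const_add_of_eq_neg (c := 1 - x) (hden t ht)
  refine ⟨hden, hf0, hode, fun t ht => ?_⟩
  have hode_on : ∀ s ∈ uIcc 0 t, HasDerivAt f (f s ^ 2 - f s) s :=
    fun s hs => hode s (uIcc_of_le ht ▸ hs).1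
  rw [← hf0]
  exact eq_mul_cexp_neg_add_integral_of_hasDerivAt hode_on
    fun s hs => ((hode_on s hs).continuousAt.pow 2).continuousWithinAt
end

section
/- (Lea–Coulson distribution.) For every m > 0 and every x ∈ (0,1): exp( -m + m ∫₀^∞ (x e^{-t}/(1 - x + x e^{-t})) e^{-t} dt ) = (1-x)^{m(1-x)/x}. Equivalently, ∫₀^∞ x e^{-2t}/(1 - x + x e^{-t}) dt = 1 + ((1-x)/x)·log(1-x). -/
open MeasureTheory Set Filter Topology

/-! The substitution `u = e^{-t}` turns the integral into `∫₀¹ u / (a + u) du` with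
`a = (1 - x) / x`; an antiderivative is `-e^{-t} + a log (a + e^{-t})`, which tends to
`a log a` at infinity. Since `a / (a + 1) = 1 - x`, the exponent `-m + m (1 + a log (1 - x))` equals `m a log (1 - x)`. -/

namespace Real

lemma hasDerivAt_neg_exp_neg_add_mul_log {a : ℝ} (ha : 0 < a) (t : ℝ) :
    HasDerivAt (fun s => -exp (-s) + a * log (a + exp (-s)))
      (exp (-(2 * t)) / (a + exp (-t))) t := by
  have hden : a + exp (-t) ≠ 0 := by positivity
  have hexp : HasDerivAt (fun s => exp (-s)) (-exp (-t)) t := by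
    simpa using (hasDerivAt_neg t).exp
  refine (hexp.neg.add (((hexp.const_add a).log hden).const_mul a)).congr_deriv ?_
  rw [show -(2 * t) = -t + -t by ring, exp_add]
  field_simp
  ring

lemma tendsto_neg_exp_neg_add_mul_log {a : ℝ} (ha : 0 < a) :
    Tendsto (fun s => -exp (-s) + a * log (a + exp (-s))) atTop (𝓝 (a * log a)) := by
  have hexp := tendsto_exp_neg_atTop_nhds_zero
  have hlog : Tendsto (fun s => log (a + exp (-s))) atTop (𝓝 (log a)) := by
    have := hexp.const_add a
    rw [add_zero] at this
    exact (continuousAt_log ha.ne').tendsto.comp this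
  simpa using hexp.neg.add (hlog.const_mul a)

lemma integral_Ioi_exp_neg_two_mul_div_add_exp_neg {a : ℝ} (ha : 0 < a) :
    ∫ t in Ioi (0 : ℝ), exp (-(2 * t)) / (a + exp (-t)) = 1 + a * log (a / (a + 1)) := by
  rw [integral_Ioi_of_hasDerivAt_of_nonneg
    (hasDerivAt_neg_exp_neg_add_mul_log ha 0).continuousAt.continuousWithinAt
    (fun t _ => hasDerivAt_neg_exp_neg_add_mul_log ha t) (fun t _ => by positivity)
    (tendsto_neg_exp_neg_add_mul_log ha),
    log_div ha.ne' (by positivity)]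
  simp only [neg_zero, exp_zero]
  ring

end Real

open Real

lemma integral_Ioi_lea_coulson {x : ℝ} (hx : x ∈ Ioo (0 : ℝ) 1) :
    ∫ t in Ioi (0 : ℝ), x * exp (-(2 * t)) / (1 - x + x * exp (-t)) =
      1 + ((1 - x) / x) * log (1 - x) := by
  obtain ⟨hx0, hx1⟩ := hx
  have ha : 0 < (1 - x) / x := div_pos (by linarith) hx0
  have hintegrand : ∀ t, x * exp (-(2 * t)) / (1 - x + x * exp (-t)) =
      exp (-(2 * t)) / ((1 - x) / x + exp (-t)) := fun t => by
    field_simp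
  have hratio : (1 - x) / x / ((1 - x) / x + 1) = 1 - x := by
    field_simp
    ring
  simp_rw [hintegrand, integral_Ioi_exp_neg_two_mul_div_add_exp_neg ha, hratio]

/-- **Lea–Coulson distribution.** For every `m > 0` and every `x ∈ (0,1)`:
`exp(-m + m ∫₀^∞ (x e^{-t}/(1 - x + x e^{-t})) e^{-t} dt) = (1-x)^{m(1-x)/x}`;
equivalently, `∫₀^∞ x e^{-2t}/(1 - x + x e^{-t}) dt = 1 + ((1-x)/x) log(1-x)`. -/
theorem stmt13 :
    ∀ m : ℝ, 0 < m → ∀ x ∈ Set.Ioo (0:ℝ) 1,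
      Real.exp (-m + m * ∫ t in Set.Ioi (0:ℝ),
          (x * Real.exp (-t) / (1 - x + x * Real.exp (-t))) * Real.exp (-t)) =
        (1 - x) ^ (m * (1 - x) / x) ∧
      (∫ t in Set.Ioi (0:ℝ), x * Real.exp (-(2 * t)) / (1 - x + x * Real.exp (-t))) =
        1 + ((1 - x) / x) * Real.log (1 - x) := by
  intro m _ x hx
  have hintegrand : ∀ t, (x * exp (-t) / (1 - x + x * exp (-t))) * exp (-t) =
      x * exp (-(2 * t)) / (1 - x + x * exp (-t)) := fun t => by
    rw [div_mul_eq_mul_div, mul_assoc, ← exp_add]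
    ring_nf
  refine ⟨?_, integral_Ioi_lea_coulson hx⟩
  rw [funext hintegrand, integral_Ioi_lea_coulson hx, rpow_def_of_pos (by linarith [hx.2])]
  congr 1
  ring
end
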